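/- arXiv:1406.1300 — 9 statements merged into one kernel-verified Lean document; each statement's English description precedes it below -/
import Mathlib

section
/- Let G be a simple graph on a finite vertex set V with |V| = n and let σ be an orientation of G. Write the characteristic polynomial of R_s(G^σ) as c_0·λ^n + c_1·λ^{n−1} + … + c_n, i.e. c_i is the coefficient of λ^{n−i}. Then c_i = 0 for every odd index i with 1 ≤ i ≤ n. -/
open Matrix Polynomial

/-- `σ` is an orientation of the simple graph `G`. -/
def IsOrientation {V : Type*} [Fintype V] (G : SimpleGraph V) [DecidableRel G.Adj]
    (σ : V → V → ℝ) : Prop :=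
  (∀ v w, σ v w + σ w v = 0) ∧
  (∀ v w, G.Adj v w → σ v w = 1 ∨ σ v w = -1) ∧
  (∀ v w, ¬ G.Adj v w → σ v w = 0)

/-- The skew Randić matrix of the oriented graph `G^σ`. -/
noncomputable def skewRandicMatrix {V : Type*} [Fintype V] (G : SimpleGraph V)
    [DecidableRel G.Adj] (σ : V → V → ℝ) : Matrix V V ℝ :=
  fun v w => σ v w / Real.sqrt ((G.degree v : ℝ) * (G.degree w : ℝ))

/-- The Randić matrix of `G`. -/
noncomputable def randicMatrix {V : Type*} [Fintype V] (G : SimpleGraph V)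
    [DecidableRel G.Adj] : Matrix V V ℝ :=
  fun v w => if G.Adj v w then 1 / Real.sqrt ((G.degree v : ℝ) * (G.degree w : ℝ)) else 0

/-- The spectrum of a real matrix: the multiset of roots, with multiplicity, of its
characteristic polynomial regarded as a matrix over `ℂ`. -/
noncomputable def spec {V : Type*} [Fintype V] [DecidableEq V] (M : Matrix V V ℝ) :
    Multiset ℂ :=
  (M.map (fun x : ℝ => (x : ℂ))).charpoly.roots

/-- The energy of a real matrix: the sum of the absolute values of its spectrum. -/
noncomputable def energy {V : Type*} [Fintype V] [DecidableEq V] (M : Matrix V V ℝ) : ℝ :=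
  ((spec M).map (fun z => ‖z‖)).sum

/-- The general Randić index `R_{-1}(G)`: the sum over all edges `{v,w}` of
`1/(d(v)·d(w))`. -/
noncomputable def randicIndexNegOne {V : Type*} [Fintype V] [DecidableEq V]
    (G : SimpleGraph V) [DecidableRel G.Adj] : ℝ :=
  ∑ e ∈ G.edgeFinset,
    Sym2.lift ⟨fun v w => 1 / ((G.degree v : ℝ) * (G.degree w : ℝ)),
      fun v w => by simp [mul_comm]⟩ e

namespace Matrix

variable {n R : Type*} [Fintype n] [DecidableEq n] [CommRing R]

theorem det_eq_zero_of_transpose_eq_neg [NoZeroDivisors R] [CharZero R] {A : Matrix n n R}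
    (hA : Aᵀ = -A) (hodd : Odd (Fintype.card n)) : A.det = 0 := by
  refine CharZero.eq_neg_self_iff.mp ?_
  calc A.det = Aᵀ.det := (det_transpose A).symm
    _ = -A.det := by rw [hA, det_neg, hodd.neg_one_pow, neg_one_mul]

/-- Each such coefficient is a signed sum of principal minors of odd order, and every principal
submatrix of a skew-symmetric matrix is again skew-symmetric. -/
theorem charpoly_coeff_card_sub_odd_eq_zero [NoZeroDivisors R] [CharZero R] {A : Matrix n n R}
    (hA : Aᵀ = -A) {k : ℕ} (hk : Odd k) (hkn : k ≤ Fintype.card n) :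
    A.charpoly.coeff (Fintype.card n - k) = 0 := by
  rw [charpoly_coeff_eq_sum_minors A k hkn]
  refine mul_eq_zero_of_right _ (Finset.sum_eq_zero fun s hs => ?_)
  apply det_eq_zero_of_transpose_eq_neg
  · rw [transpose_submatrix, hA]
    rfl
  · rwa [Fintype.card_coe, (Finset.mem_powersetCard.mp hs).2]

end Matrix

theorem IsOrientation.transpose_skewRandicMatrix {V : Type*} [Fintype V] {G : SimpleGraph V}
    [DecidableRel G.Adj] {σ : V → V → ℝ} (hσ : IsOrientation G σ) :
    (skewRandicMatrix G σ)ᵀ = -skewRandicMatrix G σ := by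
  ext v w
  rw [transpose_apply, neg_apply]
  simp only [skewRandicMatrix]
  rw [eq_neg_of_add_eq_zero_left (hσ.1 w v), mul_comm, neg_div]

theorem skewRandic_charpoly_odd_coeff_zero_general
    {V : Type*} [Fintype V] [DecidableEq V] (G : SimpleGraph V) [DecidableRel G.Adj]
    (σ : V → V → ℝ) (hσ : IsOrientation G σ)
    (i : ℕ) (hodd : Odd i) (h2 : i ≤ Fintype.card V) :
    (skewRandicMatrix G σ).charpoly.coeff (Fintype.card V - i) = 0 :=
  charpoly_coeff_card_sub_odd_eq_zero hσ.transpose_skewRandicMatrix hodd h2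

theorem skewRandic_charpoly_odd_coeff_zero
    {V : Type*} [Fintype V] [DecidableEq V] (G : SimpleGraph V) [DecidableRel G.Adj]
    (σ : V → V → ℝ) (hσ : IsOrientation G σ)
    (i : ℕ) (hodd : Odd i) (h1 : 1 ≤ i) (h2 : i ≤ Fintype.card V) :
    (skewRandicMatrix G σ).charpoly.coeff (Fintype.card V - i) = 0 :=
  skewRandic_charpoly_odd_coeff_zero_general G σ hσ i hodd h2
end

section
/- Let G be a simple graph on a finite vertex set V with |V| = n ≥ 2 and let σ be an orientation of G. Then the coefficient of λ^{n−2} in the characteristic polynomial det(λ·I − R_s(G^σ)) equals R_{−1}(G), the general Randić index of G. -/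
open Matrix Polynomial

/-
By the expansion of the characteristic polynomial in principal minors, the coefficient of
`λ^(n-2)` is the sum of all `2 × 2` principal minors of `R_s`. Since `R_s` is skew-symmetric
with zero diagonal, the minor on `{v, w}` is `R_s(v, w)² = σ(v, w)² / (d(v) d(w))`, which is
`1 / (d(v) d(w))` on an edge and `0` otherwise.
-/

theorem Sym2.toFinset_injective {α : Type*} [DecidableEq α] :
    Function.Injective (Sym2.toFinset : Sym2 α → Finset α) := fun _ _ h =>
  Sym2.ext fun x => by rw [← Sym2.mem_toFinset, h, Sym2.mem_toFinset]

theorem Matrix.det_submatrix_pair {n R : Type*} [DecidableEq n] [CommRing R]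
    (M : Matrix n n R) {a b : n} (hab : a ≠ b) :
    (M.submatrix (Subtype.val : ({a, b} : Finset n) → n) Subtype.val).det
      = M a a * M b b - M a b * M b a := by
  let e : Fin 2 ≃ ({a, b} : Finset n) := Equiv.ofBijective
    (fun i => ⟨![a, b] i, by fin_cases i <;> simp⟩)
    ⟨fun i j h => by fin_cases i <;> fin_cases j <;> simp_all [hab.symm],
      fun ⟨x, hx⟩ => by
        rcases Finset.mem_insert.mp hx with rfl | hx
        · exact ⟨0, rfl⟩
        · exact ⟨1, Subtype.ext (Finset.mem_singleton.mp hx).symm⟩⟩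
  rw [← det_submatrix_equiv_self e, det_fin_two]
  rfl

theorem SimpleGraph.sum_powersetCard_two_eq_sum_edgeFinset {V β : Type*} [Fintype V]
    [DecidableEq V] [AddCommMonoid β] (G : SimpleGraph V) [DecidableRel G.Adj]
    (f : Finset V → β) (hf : ∀ a b, a ≠ b → ¬G.Adj a b → f {a, b} = 0) :
    ∑ s ∈ Finset.univ.powersetCard 2, f s = ∑ e ∈ G.edgeFinset, f e.toFinset := by
  rw [← Finset.sum_image Sym2.toFinset_injective.injOn]
  symm
  refine Finset.sum_subset ?_ fun s hs hnot => ?_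
  · intro s hs
    obtain ⟨e, he, rfl⟩ := Finset.mem_image.mp hs
    exact Finset.mem_powersetCard.mpr ⟨Finset.subset_univ _,
      Sym2.card_toFinset_of_not_isDiag e (G.not_isDiag_of_mem_edgeSet (G.mem_edgeFinset.mp he))⟩
  · obtain ⟨a, b, hab, rfl⟩ := Finset.card_eq_two.mp (Finset.mem_powersetCard.mp hs).2
    refine hf a b hab fun hadj => hnot (Finset.mem_image.mpr ⟨s(a, b), ?_, Sym2.toFinset_mk_eq⟩)
    exact G.mem_edgeFinset.mpr hadj

namespace IsOrientation

variable {V : Type*} [Fintype V] {G : SimpleGraph V} [DecidableRel G.Adj] {σ : V → V → ℝ}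

theorem apply_swap (hσ : IsOrientation G σ) (v w : V) : σ w v = -σ v w := by
  linarith [hσ.1 v w]

theorem apply_self (hσ : IsOrientation G σ) (v : V) : σ v v = 0 := by
  linarith [hσ.apply_swap v v]

theorem sq_apply (hσ : IsOrientation G σ) (v w : V) : σ v w ^ 2 = if G.Adj v w then 1 else 0 := by
  split_ifs with h
  · rcases hσ.2.1 v w h with h1 | h1 <;> simp [h1]
  · simp [hσ.2.2 v w h]

theorem skewRandicMatrix_apply_swap (hσ : IsOrientation G σ) (v w : V) :
    skewRandicMatrix G σ w v = -skewRandicMatrix G σ v w := by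
  rw [skewRandicMatrix, skewRandicMatrix, hσ.apply_swap, mul_comm (G.degree w : ℝ), neg_div]

theorem skewRandicMatrix_apply_self (hσ : IsOrientation G σ) (v : V) :
    skewRandicMatrix G σ v v = 0 := by
  rw [skewRandicMatrix, hσ.apply_self, zero_div]

theorem sq_skewRandicMatrix_apply (hσ : IsOrientation G σ) (v w : V) :
    skewRandicMatrix G σ v w ^ 2
      = if G.Adj v w then 1 / ((G.degree v : ℝ) * (G.degree w : ℝ)) else 0 := by
  rw [skewRandicMatrix, div_pow, Real.sq_sqrt (by positivity), hσ.sq_apply]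
  split_ifs <;> simp

theorem det_submatrix_pair_skewRandicMatrix (hσ : IsOrientation G σ) [DecidableEq V] {a b : V}
    (hab : a ≠ b) :
    ((skewRandicMatrix G σ).submatrix (Subtype.val : ({a, b} : Finset V) → V)
        Subtype.val).det
      = if G.Adj a b then 1 / ((G.degree a : ℝ) * (G.degree b : ℝ)) else 0 := by
  rw [det_submatrix_pair _ hab, hσ.skewRandicMatrix_apply_self, hσ.skewRandicMatrix_apply_self,
    hσ.skewRandicMatrix_apply_swap a b, ← hσ.sq_skewRandicMatrix_apply]
  ring

end IsOrientation

theorem skewRandic_charpoly_coeff_two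
    {V : Type*} [Fintype V] [DecidableEq V] (G : SimpleGraph V) [DecidableRel G.Adj]
    (σ : V → V → ℝ) (hσ : IsOrientation G σ) (hn : 2 ≤ Fintype.card V) :
    (skewRandicMatrix G σ).charpoly.coeff (Fintype.card V - 2)
      = randicIndexNegOne G := by
  rw [charpoly_coeff_eq_sum_minors _ 2 hn, neg_one_sq, one_mul,
    G.sum_powersetCard_two_eq_sum_edgeFinset _ fun a b hab hadj => by
      rw [hσ.det_submatrix_pair_skewRandicMatrix hab, if_neg hadj]]
  refine Finset.sum_congr rfl fun e he => ?_
  induction e with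
  | _ a b =>
    have hadj : G.Adj a b := G.mem_edgeFinset.mp he
    rw [Sym2.toFinset_mk_eq, hσ.det_submatrix_pair_skewRandicMatrix hadj.ne, if_pos hadj]
    rfl
end

section
/- Let G be a simple graph on a finite vertex set V with |V| = n and let σ be an orientation of G. Then RE_s(G^σ) ≤ 2·√(⌊n/2⌋·R_{−1}(G)). -/
open Matrix Polynomial

/-!
The matrix `i • R_s` is Hermitian, so the skew Randić spectrum is `i μ_j` with `μ_j` real. As the
roots of a real polynomial it is closed under conjugation, so the `μ_j` are symmetric about `0` and
at most `2 ⌊n/2⌋` of them are nonzero. Moreover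
`∑ μ_j² = -tr (R_s²) = ∑_{v,w} R_s(v,w)² = 2 R_{-1}(G)`, and Cauchy–Schwarz over the nonzero
`μ_j` gives `RE_s² ≤ 2 ⌊n/2⌋ · 2 R_{-1}(G)`.
-/

open Finset Complex

namespace Matrix

variable {n : Type*} [Fintype n] [DecidableEq n]

lemma charpoly_conjStarAlgAut {R : Type*} [CommRing R] [StarRing R]
    (U : unitary (Matrix n n R)) (A : Matrix n n R) :
    (Unitary.conjStarAlgAut R _ U A).charpoly = A.charpoly := by
  rw [Unitary.conjStarAlgAut_apply, charpoly_mul_comm, ← mul_assoc, Unitary.coe_star_mul_self,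
    one_mul]

lemma trace_conjStarAlgAut {R : Type*} [CommRing R] [StarRing R]
    (U : unitary (Matrix n n R)) (A : Matrix n n R) :
    (Unitary.conjStarAlgAut R _ U A).trace = A.trace := by
  rw [Unitary.conjStarAlgAut_apply, trace_mul_cycle, Unitary.coe_star_mul_self, one_mul]

omit [Fintype n] [DecidableEq n] in
lemma isHermitian_I_smul_map_ofReal {M : Matrix n n ℝ} (hM : Mᵀ = -M) :
    (I • M.map ((↑) : ℝ → ℂ)).IsHermitian := by
  ext v w
  have hvw : M w v = -M v w := by rw [← transpose_apply M, hM, neg_apply]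
  simp [hvw, conj_ofReal]

lemma exists_unitary_diagonal_of_transpose_eq_neg {M : Matrix n n ℝ} (hM : Mᵀ = -M) :
    ∃ (U : unitary (Matrix n n ℂ)) (μ : n → ℝ),
      M.map ((↑) : ℝ → ℂ) = Unitary.conjStarAlgAut ℂ _ U (diagonal fun j => μ j * I) := by
  have hA := isHermitian_I_smul_map_ofReal hM
  refine ⟨hA.eigenvectorUnitary, -hA.eigenvalues, ?_⟩
  have hdiag : diagonal (fun j => ((-hA.eigenvalues j : ℝ) : ℂ) * I)
      = (-I) • diagonal (RCLike.ofReal ∘ hA.eigenvalues) := by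
    rw [← diagonal_smul]
    congr 1
    ext j
    simp [mul_comm]
  simp only [Pi.neg_apply] at hdiag ⊢
  rw [hdiag, map_smul, ← hA.spectral_theorem, smul_smul]
  simp

end Matrix

lemma spec_map_conj {n : Type*} [Fintype n] [DecidableEq n] (M : Matrix n n ℝ) :
    (spec M).map (starRingEnd ℂ) = spec M := by
  have hreal : (M.map ((↑) : ℝ → ℂ)).charpoly = M.charpoly.map (algebraMap ℝ ℂ) :=
    charpoly_map M (algebraMap ℝ ℂ)
  have hconj : (M.map ((↑) : ℝ → ℂ)).charpoly.map (starRingEnd ℂ)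
      = (M.map ((↑) : ℝ → ℂ)).charpoly := by
    rw [hreal, Polynomial.map_map]
    congr 1
    exact RingHom.ext conj_ofReal
  unfold spec
  rw [← (IsAlgClosed.splits _).roots_map, hconj]

section SkewSymmetric

variable {n : Type*} [Fintype n] [DecidableEq n]

lemma exists_spec_eq_and_sum_sq_eq_of_transpose_eq_neg {M : Matrix n n ℝ} (hM : Mᵀ = -M) :
    ∃ μ : n → ℝ, spec M = univ.val.map (fun j => (μ j : ℂ) * I) ∧
      ∑ j, μ j ^ 2 = ∑ v, ∑ w, M v w ^ 2 := by
  obtain ⟨U, μ, hU⟩ := exists_unitary_diagonal_of_transpose_eq_neg hM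
  refine ⟨μ, ?_, ?_⟩
  · rw [spec, hU, charpoly_conjStarAlgAut, charpoly_diagonal,
      Polynomial.roots_prod _ _ (prod_ne_zero_iff.mpr fun j _ => Polynomial.X_sub_C_ne_zero _)]
    simp only [Polynomial.roots_X_sub_C]
    exact Multiset.bind_singleton _ _
  · have hvw : ∀ v w, M w v = -M v w := fun v w => by
      rw [← transpose_apply M, hM, Matrix.neg_apply]
    have hlhs : trace (M.map ((↑) : ℝ → ℂ) ^ 2) = -((∑ v, ∑ w, M v w ^ 2 : ℝ) : ℂ) := by
      calc trace (M.map ((↑) : ℝ → ℂ) ^ 2) = ∑ v, ∑ w, ((M v w * M w v : ℝ) : ℂ) := by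
            simp [sq, trace, mul_apply]
        _ = ∑ v, ∑ w, -((M v w ^ 2 : ℝ) : ℂ) := by
            refine sum_congr rfl fun v _ => sum_congr rfl fun w _ => ?_
            rw [hvw v w, mul_neg, sq, ofReal_neg]
        _ = _ := by simp
    have hrhs : trace ((diagonal fun j => (μ j : ℂ) * I) ^ 2) = -((∑ j, μ j ^ 2 : ℝ) : ℂ) := by
      simp [diagonal_pow, mul_pow]
    have htrace := congrArg (fun A => trace (A ^ 2)) hU
    simp only [← map_pow, trace_conjStarAlgAut, hlhs, hrhs, neg_inj] at htrace
    exact_mod_cast htrace.symm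

lemma map_neg_eq_of_spec_eq {M : Matrix n n ℝ} {μ : n → ℝ}
    (h : spec M = univ.val.map (fun j => (μ j : ℂ) * I)) :
    univ.val.map (fun j => -μ j) = univ.val.map μ := by
  have him := congrArg (Multiset.map im) (spec_map_conj M)
  rw [h, Multiset.map_map, Multiset.map_map, Multiset.map_map] at him
  simpa using him

lemma energy_eq_sum_abs {M : Matrix n n ℝ} {μ : n → ℝ}
    (h : spec M = univ.val.map (fun j => (μ j : ℂ) * I)) :
    energy M = ∑ j, |μ j| := by
  simp [energy, h, Multiset.map_map]

end SkewSymmetric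

section NegInvariant

variable {ι : Type*} [Fintype ι] {μ : ι → ℝ}

lemma card_filter_ne_zero_le_of_map_neg_eq
    (hμ : univ.val.map (fun i => -μ i) = univ.val.map μ) :
    #{i | μ i ≠ 0} ≤ 2 * (Fintype.card ι / 2) := by
  classical
  have hposneg : #{i | 0 < μ i} = #{i | μ i < 0} := by
    have h := congrArg (Multiset.countP (fun x : ℝ => 0 < x)) hμ
    simp only [Multiset.countP_map, neg_pos] at h
    exact h.symm
  have hdisj : Disjoint ({i | 0 < μ i} : Finset ι) ({i | μ i < 0} : Finset ι) :=
    disjoint_filter.mpr fun _ _ hpos hneg => lt_asymm hpos hneg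
  have hsplit : #{i | μ i ≠ 0} = #{i | 0 < μ i} + #{i | μ i < 0} := by
    rw [← card_union_of_disjoint hdisj, ← filter_or]
    simp_rw [ne_iff_lt_or_gt, or_comm]
  have hle : #{i | 0 < μ i} + #{i | μ i < 0} ≤ Fintype.card ι := by
    rw [← card_union_of_disjoint hdisj]
    exact card_le_univ _
  omega

lemma sq_sum_abs_le_card_filter_ne_zero_mul_sum_sq (μ : ι → ℝ) :
    (∑ i, |μ i|) ^ 2 ≤ #{i | μ i ≠ 0} * ∑ i, μ i ^ 2 := by
  calc (∑ i, |μ i|) ^ 2 = (∑ i with μ i ≠ 0, |μ i|) ^ 2 := by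
        rw [sum_filter_of_ne fun i _ h => abs_ne_zero.mp h]
    _ ≤ #{i | μ i ≠ 0} * ∑ i with μ i ≠ 0, |μ i| ^ 2 := sq_sum_le_card_mul_sum_sq
    _ = #{i | μ i ≠ 0} * ∑ i, μ i ^ 2 := by
        simp_rw [sq_abs]
        rw [sum_filter_of_ne fun i _ h => pow_ne_zero_iff two_ne_zero |>.mp h]

lemma sq_sum_abs_le_of_map_neg_eq (hμ : univ.val.map (fun i => -μ i) = univ.val.map μ) :
    (∑ i, |μ i|) ^ 2 ≤ 2 * (Fintype.card ι / 2 : ℕ) * ∑ i, μ i ^ 2 := by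
  calc (∑ i, |μ i|) ^ 2 ≤ #{i | μ i ≠ 0} * ∑ i, μ i ^ 2 :=
        sq_sum_abs_le_card_filter_ne_zero_mul_sum_sq μ
    _ ≤ 2 * (Fintype.card ι / 2 : ℕ) * ∑ i, μ i ^ 2 := by
        gcongr
        exact_mod_cast card_filter_ne_zero_le_of_map_neg_eq hμ

end NegInvariant

lemma SimpleGraph.sum_darts_eq_two_mul_sum_edgeFinset {V : Type*} [Fintype V] [DecidableEq V]
    (G : SimpleGraph V) [DecidableRel G.Adj] (f : Sym2 V → ℝ) :
    ∑ d : G.Dart, f d.edge = 2 * ∑ e ∈ G.edgeFinset, f e := by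
  rw [← sum_fiberwise_of_maps_to (g := SimpleGraph.Dart.edge) (t := G.edgeFinset)
    (fun d _ => G.mem_edgeFinset.mpr d.edge_mem), mul_sum]
  refine sum_congr rfl fun e he => ?_
  rw [sum_congr rfl fun d hd => by rw [(mem_filter.mp hd).2], sum_const,
    G.dart_edge_fiber_card e (G.mem_edgeFinset.mp he), two_smul, two_mul]

lemma SimpleGraph.sum_sum_ite_adj_eq_sum_darts {V : Type*} [Fintype V] (G : SimpleGraph V)
    [DecidableRel G.Adj] (f : V → V → ℝ) :
    ∑ v, ∑ w, (if G.Adj v w then f v w else 0) = ∑ d : G.Dart, f d.fst d.snd := by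
  rw [← sum_product', ← sum_filter]
  exact (sum_bij (fun d _ => d.toProd) (by simp) (fun _ _ _ _ h => SimpleGraph.Dart.ext _ _ h)
    (fun p hp => ⟨⟨p, (mem_filter.mp hp).2⟩, mem_univ _, rfl⟩) (fun _ _ => rfl)).symm

section SkewRandic

variable {V : Type*} [Fintype V] {G : SimpleGraph V} [DecidableRel G.Adj] {σ : V → V → ℝ}

lemma transpose_skewRandicMatrix (hσ : ∀ v w, σ v w + σ w v = 0) :
    (skewRandicMatrix G σ)ᵀ = -skewRandicMatrix G σ := by
  ext v w
  simp only [transpose_apply, Matrix.neg_apply, skewRandicMatrix, mul_comm (G.degree w : ℝ),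
    eq_neg_iff_add_eq_zero.mpr (hσ w v), neg_div]

lemma skewRandicMatrix_sq_apply (hσ : IsOrientation G σ) (v w : V) :
    skewRandicMatrix G σ v w ^ 2
      = if G.Adj v w then 1 / ((G.degree v : ℝ) * (G.degree w : ℝ)) else 0 := by
  obtain ⟨-, hadj, hnadj⟩ := hσ
  by_cases h : G.Adj v w
  · have hσ2 : σ v w ^ 2 = 1 := by rcases hadj v w h with h1 | h1 <;> simp [h1]
    rw [if_pos h, skewRandicMatrix, div_pow, hσ2, Real.sq_sqrt (by positivity)]
  · simp [skewRandicMatrix, hnadj v w h, h]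

lemma sum_sq_skewRandicMatrix [DecidableEq V] (hσ : IsOrientation G σ) :
    ∑ v, ∑ w, skewRandicMatrix G σ v w ^ 2 = 2 * randicIndexNegOne G := by
  simp_rw [skewRandicMatrix_sq_apply hσ]
  rw [G.sum_sum_ite_adj_eq_sum_darts, randicIndexNegOne,
    ← G.sum_darts_eq_two_mul_sum_edgeFinset]
  rfl

end SkewRandic

theorem skewRandic_energy_upper_bound
    {V : Type*} [Fintype V] [DecidableEq V] (G : SimpleGraph V) [DecidableRel G.Adj]
    (σ : V → V → ℝ) (hσ : IsOrientation G σ) :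
    energy (skewRandicMatrix G σ)
      ≤ 2 * Real.sqrt ((Fintype.card V / 2 : ℕ) * randicIndexNegOne G) := by
  obtain ⟨μ, hspec, hsq⟩ := exists_spec_eq_and_sum_sq_eq_of_transpose_eq_neg
    (transpose_skewRandicMatrix (G := G) hσ.1)
  rw [sum_sq_skewRandicMatrix hσ] at hsq
  have hbound : (∑ j, |μ j|) ^ 2 ≤ 2 ^ 2 * ((Fintype.card V / 2 : ℕ) * randicIndexNegOne G) := by
    have := sq_sum_abs_le_of_map_neg_eq (map_neg_eq_of_spec_eq hspec)
    rw [hsq] at this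
    exact this.trans_eq (by ring)
  rw [energy_eq_sum_abs hspec, ← Real.sqrt_sq zero_le_two, ← Real.sqrt_mul (sq_nonneg 2)]
  exact Real.le_sqrt_of_sq_le hbound
end

section
/- Let G be a simple graph on a finite vertex set V with |V| = n ≥ 2 that has no isolated vertices, and let σ be any orientation of G. Then RE_s(G^σ) = 2·⌊n/2⌋ if and only if either (i) n is even and every vertex of G has degree 1 (G is a disjoint union of single edges), or (ii) n is odd and exactly one vertex of G has degree 2 while all other vertices have degree 1 (G is a disjoint union of (n−3)/2 single edges and one path on 3 vertices). -/
open Matrix Polynomial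

/-!
The skew Randić matrix `M` is real skew-symmetric, so `i • M` is Hermitian and the spectrum of
`M` is `{-i μ_j}` with `μ_j` real; moreover `∑ μ_j² = ∑ M_vw² = ∑_{v ~ w} 1 / (d_v d_w)`, and some
`μ_j` vanishes when `n` is odd. Since `|M|` is the Randić matrix, which has the positive
eigenvector `√d` for the eigenvalue `1`, every `|μ_j| ≤ 1`. On the `2⌊n/2⌋` indices carrying the
possibly nonzero `μ_j` we then have `μ_j² ≤ |μ_j| ≤ 1` and `μ_j² ≥ 2|μ_j| - 1`, so the energy
`∑ |μ_j|` equals `2⌊n/2⌋` if and only if `∑ μ_j²` does.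

It remains to read off the graph from `∑_{v ~ w} 1 / (d_v d_w)`. Its gap to `n` is the sum
of the nonnegative terms `(d_w - 1) / (d_v d_w)` over ordered adjacent pairs, which vanishes iff
all degrees are `1`. A vertex of degree at least `2` carries at least `1` of the symmetrised
gap and its neighbours carry a positive amount, so a gap of `1` leaves room for only one
such vertex `c`, and then the gap is `d_c - 1`.
-/

open Finset

theorem Finset.sum_abs_eq_card_iff_sum_sq_eq_card {ι : Type*} {s : Finset ι} {f : ι → ℝ}
    (hf : ∀ i ∈ s, |f i| ≤ 1) : ∑ i ∈ s, |f i| = #s ↔ ∑ i ∈ s, f i ^ 2 = #s := by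
  have h_sq_le : ∑ i ∈ s, f i ^ 2 ≤ ∑ i ∈ s, |f i| := sum_le_sum fun i hi => by
    rw [← sq_abs]
    nlinarith [abs_nonneg (f i), hf i hi]
  have h_le_card : ∑ i ∈ s, |f i| ≤ #s := by simpa using sum_le_sum hf
  have h_tangent : ∑ i ∈ s, (2 * |f i| - 1) ≤ ∑ i ∈ s, f i ^ 2 := sum_le_sum fun i _ => by
    rw [← sq_abs]
    nlinarith [sq_nonneg (|f i| - 1)]
  rw [sum_sub_distrib, ← mul_sum] at h_tangent
  simp only [sum_const, nsmul_eq_mul, mul_one] at h_tangent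
  constructor <;> intro h <;> linarith

namespace Matrix

variable {n : Type*} [Fintype n]

theorem exists_mulVec_eq_smul_of_isRoot_charpoly [DecidableEq n] {K : Type*} [Field K]
    {A : Matrix n n K} {z : K} (hz : A.charpoly.IsRoot z) : ∃ x ≠ 0, A *ᵥ x = z • x := by
  rw [Polynomial.IsRoot, eval_charpoly, ← exists_mulVec_eq_zero_iff] at hz
  obtain ⟨x, hx, hAx⟩ := hz
  rw [sub_mulVec, sub_eq_zero, scalar_apply] at hAx
  refine ⟨x, hx, ?_⟩
  ext i
  simp [← hAx, mulVec_diagonal]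

theorem norm_le_of_mulVec_eq_smul {𝕜 : Type*} [NormedField 𝕜] {A : Matrix n n 𝕜}
    {p : n → ℝ} {r : ℝ} (hp : ∀ i, 0 < p i) (hrow : ∀ i, ∑ j, ‖A i j‖ * p j ≤ r * p i)
    {x : n → 𝕜} (hx : x ≠ 0) {z : 𝕜} (hAx : A *ᵥ x = z • x) : ‖z‖ ≤ r := by
  obtain ⟨j, hj⟩ := Function.ne_iff.mp hx
  obtain ⟨i, -, hmax⟩ := exists_max_image univ (fun k => ‖x k‖ / p k) ⟨j, mem_univ j⟩
  set t := ‖x i‖ / p i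
  have hx_le : ∀ k, ‖x k‖ ≤ t * p k := fun k => (div_le_iff₀ (hp k)).mp (hmax k (mem_univ k))
  have ht : 0 < t := (div_pos (norm_pos_iff.mpr hj) (hp j)).trans_le (hmax j (mem_univ j))
  have hxi : 0 < ‖x i‖ := by simpa [t, hp i] using ht
  refine le_of_mul_le_mul_right ?_ hxi
  calc ‖z‖ * ‖x i‖ = ‖∑ k, A i k * x k‖ := by
        rw [← norm_mul, ← smul_eq_mul, ← Pi.smul_apply, ← hAx]
        rfl
    _ ≤ ∑ k, ‖A i k‖ * ‖x k‖ := (norm_sum_le _ _).trans (sum_le_sum fun k _ => norm_mul_le _ _)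
    _ ≤ ∑ k, ‖A i k‖ * (t * p k) := by gcongr with k; exact hx_le k
    _ = t * ∑ k, ‖A i k‖ * p k := by rw [mul_sum]; congr 1 with k; ring
    _ ≤ t * (r * p i) := by gcongr; exact hrow i
    _ = r * ‖x i‖ := by rw [mul_left_comm, div_mul_cancel₀ _ (hp i).ne']

namespace IsHermitian

variable [DecidableEq n] {𝕜 : Type*} [RCLike 𝕜] {A : Matrix n n 𝕜} (hA : A.IsHermitian)
include hA

theorem roots_charpoly_smul (c : 𝕜) :
    (c • A).charpoly.roots = univ.val.map fun i => c * hA.eigenvalues i := by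
  conv_lhs => rw [hA.spectral_theorem, ← map_smul, Unitary.conjStarAlgAut_apply,
    charpoly_mul_comm, ← mul_assoc, Unitary.coe_star_mul_self, one_mul, ← diagonal_smul,
    charpoly_diagonal]
  rw [← roots_multiset_prod_X_sub_C (univ.val.map _), Multiset.map_map]
  rfl

theorem trace_mul_self : (A * A).trace = ∑ i, (hA.eigenvalues i : 𝕜) ^ 2 := by
  conv_lhs => rw [hA.spectral_theorem, ← map_mul, Unitary.conjStarAlgAut_apply, trace_mul_cycle,
    Unitary.coe_star_mul_self, one_mul, diagonal_mul_diagonal, trace_diagonal]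
  simp [sq]

end IsHermitian

section SkewSymmetric

variable {M : Matrix n n ℝ}

omit [Fintype n] in
theorem isHermitian_I_smul_map_ofReal_s7 (hM : Mᵀ = -M) :
    (Complex.I • M.map fun x : ℝ => (x : ℂ)).IsHermitian := by
  ext v w
  have hwv : M w v = -M v w := by simpa using congrFun (congrFun hM v) w
  simp [hwv]

variable [DecidableEq n]

noncomputable def skewEigenvalues (hM : Mᵀ = -M) : n → ℝ :=
  (isHermitian_I_smul_map_ofReal_s7 hM).eigenvalues

variable (hM : Mᵀ = -M)
include hM

theorem spec_eq_map_skewEigenvalues :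
    spec M = univ.val.map fun i => -Complex.I * skewEigenvalues hM i := by
  have hmap : (M.map fun x : ℝ => (x : ℂ)) =
      -Complex.I • Complex.I • M.map fun x : ℝ => (x : ℂ) := by
    rw [smul_smul, neg_mul, Complex.I_mul_I, neg_neg, one_smul]
  rw [spec, hmap, (isHermitian_I_smul_map_ofReal_s7 hM).roots_charpoly_smul]
  rfl

theorem energy_eq_sum_abs_skewEigenvalues : energy M = ∑ i, |skewEigenvalues hM i| := by
  rw [energy, spec_eq_map_skewEigenvalues hM, Multiset.map_map, ← sum_eq_multiset_sum]
  simp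

theorem sum_sq_skewEigenvalues : ∑ i, skewEigenvalues hM i ^ 2 = ∑ v, ∑ w, M v w ^ 2 := by
  have htrace : ((Complex.I • M.map fun x : ℝ => (x : ℂ)) *
      (Complex.I • M.map fun x : ℝ => (x : ℂ))).trace = ((∑ v, ∑ w, M v w ^ 2 : ℝ) : ℂ) := by
    simp only [trace, diag, mul_apply, smul_apply, map_apply, smul_eq_mul]
    push_cast
    refine sum_congr rfl fun v _ => sum_congr rfl fun w _ => ?_
    have hwv : M w v = -M v w := by simpa using congrFun (congrFun hM v) w
    rw [hwv]
    push_cast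
    ring_nf
    simp
  rw [(isHermitian_I_smul_map_ofReal_s7 hM).trace_mul_self] at htrace
  simp only [← RCLike.ofReal_pow, ← RCLike.ofReal_sum] at htrace
  exact RCLike.ofReal_injective htrace

theorem exists_skewEigenvalues_eq_zero (hodd : Odd (Fintype.card n)) :
    ∃ j, skewEigenvalues hM j = 0 := by
  have hdet : M.det = 0 := by
    have h := M.det_transpose
    rw [hM, det_neg, hodd.neg_one_pow, neg_one_mul, neg_eq_iff_add_eq_zero] at h
    linarith
  have hdetC : (M.map fun x : ℝ => (x : ℂ)).det = 0 := by
    rw [show (M.map fun x : ℝ => (x : ℂ)) = Complex.ofRealHom.mapMatrix M from rfl,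
      ← RingHom.map_det, hdet, map_zero]
  have hprod := (isHermitian_I_smul_map_ofReal_s7 hM).det_eq_prod_eigenvalues
  rw [det_smul, hdetC, mul_zero, eq_comm, prod_eq_zero_iff] at hprod
  obtain ⟨j, -, hj⟩ := hprod
  exact ⟨j, RCLike.ofReal_eq_zero.mp hj⟩

theorem exists_card_eq_forall_notMem_skewEigenvalues_eq_zero :
    ∃ S : Finset n, #S = 2 * (Fintype.card n / 2) ∧ ∀ i ∉ S, skewEigenvalues hM i = 0 := by
  rcases Nat.even_or_odd (Fintype.card n) with h | h
  · exact ⟨univ, by rw [card_univ, Nat.two_mul_div_two_of_even h],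
      fun i hi => absurd (mem_univ i) hi⟩
  · obtain ⟨j, hj⟩ := exists_skewEigenvalues_eq_zero hM h
    refine ⟨univ.erase j, ?_, fun i hi => ?_⟩
    · rw [card_erase_of_mem (mem_univ j), card_univ, Nat.two_mul_odd_div_two (Nat.odd_iff.mp h)]
    · rw [mem_erase, not_and_or, not_not] at hi
      exact hi.elim (· ▸ hj) (absurd (mem_univ i))

theorem energy_eq_two_mul_half_card_iff (hspec : ∀ z ∈ spec M, ‖z‖ ≤ 1) :
    energy M = 2 * (Fintype.card n / 2 : ℕ) ↔
      ∑ v, ∑ w, M v w ^ 2 = 2 * (Fintype.card n / 2 : ℕ) := by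
  have habs : ∀ i, |skewEigenvalues hM i| ≤ 1 := fun i => by
    have := hspec _ (by
      rw [spec_eq_map_skewEigenvalues hM]
      exact Multiset.mem_map_of_mem _ (mem_univ_val i))
    rwa [norm_mul, norm_neg, Complex.norm_I, one_mul, Complex.norm_real, Real.norm_eq_abs] at this
  obtain ⟨S, hS, hzero⟩ := exists_card_eq_forall_notMem_skewEigenvalues_eq_zero hM
  have hcard : ((2 * (Fintype.card n / 2) : ℕ) : ℝ) = 2 * (Fintype.card n / 2 : ℕ) := by
    push_cast
    rfl
  rw [energy_eq_sum_abs_skewEigenvalues hM, ← sum_sq_skewEigenvalues hM, ← hcard, ← hS,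
    ← sum_subset (subset_univ S) fun i _ hi => by rw [hzero i hi, abs_zero],
    ← sum_subset (subset_univ S) fun i _ hi => by rw [hzero i hi, sq, zero_mul]]
  exact sum_abs_eq_card_iff_sum_sq_eq_card fun i _ => habs i

end SkewSymmetric

end Matrix

namespace SimpleGraph

variable {V : Type*} [Fintype V] (G : SimpleGraph V) [DecidableRel G.Adj]

theorem sum_ite_adj {R : Type*} [NonAssocSemiring R] (v : V) (c : R) :
    ∑ u, (if G.Adj v u then c else 0) = G.degree v * c := by
  rw [← sum_filter, ← neighborFinset_eq_filter, sum_const, card_neighborFinset_eq_degree,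
    nsmul_eq_mul]

theorem degree_pos_of_adj {v u : V} (h : G.Adj v u) : 0 < G.degree u :=
  G.degree_pos_iff_exists_adj u |>.mpr ⟨v, h.symm⟩

theorem randicMatrix_mulVec_sqrt_degree :
    randicMatrix G *ᵥ (fun v => √(G.degree v : ℝ)) = fun v => √(G.degree v : ℝ) := by
  ext v
  have hterm : ∀ u, randicMatrix G v u * √(G.degree u : ℝ) =
      if G.Adj v u then (√(G.degree v : ℝ))⁻¹ else 0 := fun u => by
    by_cases h : G.Adj v u
    · have hu : (0 : ℝ) < G.degree u := by exact_mod_cast G.degree_pos_of_adj h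
      simp only [randicMatrix, if_pos h, Real.sqrt_mul (Nat.cast_nonneg _)]
      field_simp
    · simp [randicMatrix, h]
  simp only [mulVec, dotProduct, hterm, sum_ite_adj, ← div_eq_mul_inv, Real.div_sqrt]

noncomputable def randicGap (v u : V) : ℝ :=
  if G.Adj v u then ((G.degree u : ℝ) - 1) / (G.degree v * G.degree u) else 0

variable {G}

theorem randicGap_nonneg (v u : V) : 0 ≤ G.randicGap v u := by
  unfold randicGap
  split_ifs with h
  · have hv : (0 : ℝ) < G.degree v := by exact_mod_cast G.degree_pos_of_adj h.symm
    have hu : (1 : ℝ) ≤ G.degree u := by exact_mod_cast G.degree_pos_of_adj h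
    exact div_nonneg (by linarith) (by positivity)
  · exact le_rfl

theorem randicGap_eq_zero_of_degree_le_one {u : V} (hu : G.degree u ≤ 1) (v : V) :
    G.randicGap v u = 0 := by
  unfold randicGap
  split_ifs with h
  · simp [le_antisymm hu (G.degree_pos_of_adj h)]
  · rfl

theorem degree_eq_one_of_randicGap_eq_zero {v u : V} (h : G.Adj v u)
    (h0 : G.randicGap v u = 0) : G.degree u = 1 := by
  have hv : (0 : ℝ) < G.degree v := by exact_mod_cast G.degree_pos_of_adj h.symm
  have hu : (0 : ℝ) < G.degree u := by exact_mod_cast G.degree_pos_of_adj h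
  rw [randicGap, if_pos h, div_eq_zero_iff, sub_eq_zero] at h0
  exact_mod_cast h0.resolve_right (by positivity)

theorem randicMatrix_sq_add_randicGap (v u : V) :
    randicMatrix G v u ^ 2 + G.randicGap v u = if G.Adj v u then (G.degree v : ℝ)⁻¹ else 0 := by
  unfold randicMatrix randicGap
  split_ifs with h
  · have hv : (0 : ℝ) < G.degree v := by exact_mod_cast G.degree_pos_of_adj h.symm
    have hu : (0 : ℝ) < G.degree u := by exact_mod_cast G.degree_pos_of_adj h
    rw [div_pow, Real.sq_sqrt (by positivity)]
    field_simp
    ring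
  · simp

theorem sum_sq_randicMatrix_add_sum_randicGap (hdeg : ∀ v, 1 ≤ G.degree v) :
    ∑ v, ∑ u, randicMatrix G v u ^ 2 + ∑ v, ∑ u, G.randicGap v u = Fintype.card V := by
  simp only [← sum_add_distrib, randicMatrix_sq_add_randicGap, sum_ite_adj]
  rw [← nsmul_one, ← card_univ, ← sum_const]
  refine sum_congr rfl fun v _ => mul_inv_cancel₀ ?_
  exact_mod_cast Nat.one_le_iff_ne_zero.mp (hdeg v)

theorem sum_randicGap_eq_zero_iff (hdeg : ∀ v, 1 ≤ G.degree v) :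
    ∑ v, ∑ u, G.randicGap v u = 0 ↔ ∀ v, G.degree v = 1 := by
  constructor
  · intro h u
    obtain ⟨v, hvu⟩ := G.degree_pos_iff_exists_adj u |>.mp (hdeg u)
    have hrow := (sum_eq_zero_iff_of_nonneg fun v _ =>
      sum_nonneg fun u _ => randicGap_nonneg v u).mp h v (mem_univ v)
    exact degree_eq_one_of_randicGap_eq_zero hvu.symm
      ((sum_eq_zero_iff_of_nonneg fun u _ => randicGap_nonneg v u).mp hrow u (mem_univ u))
  · intro h
    simp [randicGap_eq_zero_of_degree_le_one (h _).le]

theorem sum_randicGap_eq_of_forall_ne_degree_le_one {c : V} (hc : G.degree c ≠ 0)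
    (h : ∀ v ≠ c, G.degree v ≤ 1) : ∑ v, ∑ u, G.randicGap v u = G.degree c - 1 := by
  have hrow : ∀ v, ∑ u, G.randicGap v u = G.randicGap v c := fun v =>
    sum_eq_single c (fun u _ hu => randicGap_eq_zero_of_degree_le_one (h u hu) v)
      (absurd (mem_univ c))
  have hcol : ∀ v, G.randicGap v c =
      if G.Adj c v then ((G.degree c : ℝ) - 1) / G.degree c else 0 := fun v => by
    unfold randicGap
    simp only [G.adj_comm v c]
    split_ifs with hcv
    · rw [le_antisymm (h v (G.ne_of_adj hcv).symm) (G.degree_pos_of_adj hcv), Nat.cast_one,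
        one_mul]
    · rfl
  have hc' : (G.degree c : ℝ) ≠ 0 := by exact_mod_cast hc
  simp only [hrow, hcol, sum_ite_adj]
  field_simp

theorem one_le_sum_randicGap_add_swap {c : V} (hc : 2 ≤ G.degree c) :
    1 ≤ ∑ u, (G.randicGap u c + G.randicGap c u) := by
  have hc' : (2 : ℝ) ≤ G.degree c := by exact_mod_cast hc
  have hterm : ∀ u, (if G.Adj c u then (G.degree c : ℝ)⁻¹ else 0) ≤
      G.randicGap u c + G.randicGap c u := fun u => by
    unfold randicGap
    simp only [G.adj_comm u c]
    split_ifs with h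
    · have hu : (0 : ℝ) < G.degree u := by exact_mod_cast G.degree_pos_of_adj h
      have key : ((G.degree c : ℝ) - 1) / (G.degree u * G.degree c) +
          ((G.degree u : ℝ) - 1) / (G.degree c * G.degree u) - (G.degree c : ℝ)⁻¹ =
          ((G.degree c : ℝ) - 2) / (G.degree c * G.degree u) := by
        field_simp
        ring
      rw [← sub_nonneg, key]
      exact div_nonneg (by linarith) (by positivity)
    · simp
  calc (1 : ℝ) = ∑ u, (if G.Adj c u then (G.degree c : ℝ)⁻¹ else 0) := by
        rw [sum_ite_adj, mul_inv_cancel₀ (by positivity)]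
    _ ≤ _ := sum_le_sum fun u _ => hterm u

theorem one_lt_sum_randicGap {c₁ c₂ : V} (hne : c₁ ≠ c₂) (h₁ : 2 ≤ G.degree c₁)
    (h₂ : 2 ≤ G.degree c₂) : 1 < ∑ v, ∑ u, G.randicGap v u := by
  classical
  set h : V → ℝ := fun w => ∑ u, (G.randicGap u w + G.randicGap w u)
  have hsum : ∑ w, h w = 2 * ∑ v, ∑ u, G.randicGap v u := by
    simp only [h, sum_add_distrib]
    rw [sum_comm]
    ring
  have hnonneg : ∀ w, 0 ≤ h w := fun w =>
    sum_nonneg fun u _ => add_nonneg (randicGap_nonneg _ _) (randicGap_nonneg _ _)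
  -- besides `c₁` and `c₂`, a third vertex carries part of the symmetrised gap
  obtain ⟨v, hv, hvc₂⟩ : ∃ v ∈ G.neighborFinset c₁, v ≠ c₂ :=
    exists_mem_ne (by rw [card_neighborFinset_eq_degree]; omega) c₂
  have hadj : G.Adj c₁ v := (G.mem_neighborFinset _ _).mp hv
  have hv_pos : 0 < h v := by
    have hgap : 0 < G.randicGap v c₁ := by
      have hv' : (0 : ℝ) < G.degree v := by exact_mod_cast G.degree_pos_of_adj hadj
      have hc₁ : (2 : ℝ) ≤ G.degree c₁ := by exact_mod_cast h₁
      rw [randicGap, if_pos hadj.symm]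
      exact div_pos (by linarith) (by positivity)
    calc 0 < G.randicGap c₁ v + G.randicGap v c₁ := by
          linarith [randicGap_nonneg (G := G) c₁ v]
      _ ≤ h v := single_le_sum (f := fun u => G.randicGap u v + G.randicGap v u)
          (fun u _ => add_nonneg (randicGap_nonneg _ _) (randicGap_nonneg _ _)) (mem_univ c₁)
  have htriple : h c₁ + h c₂ + h v ≤ ∑ w, h w := by
    have := sum_le_univ_sum_of_nonneg (s := {c₁, c₂, v}) hnonneg
    rwa [sum_insert (by simp [hne, hadj.ne]), sum_pair hvc₂.symm, ← add_assoc] at this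
  linarith [one_le_sum_randicGap_add_swap h₁, one_le_sum_randicGap_add_swap h₂]

theorem sum_randicGap_eq_one_iff (hdeg : ∀ v, 1 ≤ G.degree v) :
    ∑ v, ∑ u, G.randicGap v u = 1 ↔ ∃ c, G.degree c = 2 ∧ ∀ v ≠ c, G.degree v = 1 := by
  constructor
  · intro h
    obtain ⟨c, hc⟩ : ∃ c, 2 ≤ G.degree c := by
      by_contra! hlt
      have : ∑ v, ∑ u, G.randicGap v u = 0 := by
        simp [randicGap_eq_zero_of_degree_le_one (Nat.lt_succ_iff.mp (hlt _))]
      linarith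
    have hrest : ∀ v ≠ c, G.degree v ≤ 1 := fun v hv => by
      by_contra! hv2
      linarith [one_lt_sum_randicGap hv hv2 hc]
    rw [sum_randicGap_eq_of_forall_ne_degree_le_one (by omega) hrest] at h
    exact ⟨c, by exact_mod_cast (by linarith : (G.degree c : ℝ) = 2),
      fun v hv => le_antisymm (hrest v hv) (hdeg v)⟩
  · rintro ⟨c, hc, hrest⟩
    rw [sum_randicGap_eq_of_forall_ne_degree_le_one (by omega) fun v hv => (hrest v hv).le, hc]
    norm_num

end SimpleGraph

namespace IsOrientation

variable {V : Type*} [Fintype V] {G : SimpleGraph V} [DecidableRel G.Adj] {σ : V → V → ℝ}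
  (hσ : IsOrientation G σ)
include hσ

theorem abs_skewRandicMatrix (v w : V) : |skewRandicMatrix G σ v w| = randicMatrix G v w := by
  by_cases h : G.Adj v w
  · simp only [skewRandicMatrix, randicMatrix, if_pos h, abs_div,
      abs_of_nonneg (Real.sqrt_nonneg _)]
    rcases hσ.2.1 v w h with hvw | hvw <;> simp [hvw]
  · simp [skewRandicMatrix, randicMatrix, h, hσ.2.2 v w h]

theorem skewRandicMatrix_transpose : (skewRandicMatrix G σ)ᵀ = -skewRandicMatrix G σ := by
  ext v w
  simp only [transpose_apply, Matrix.neg_apply, skewRandicMatrix, mul_comm (G.degree w : ℝ),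
    eq_neg_of_add_eq_zero_left (hσ.1 w v), neg_div]

theorem sum_sq_skewRandicMatrix :
    ∑ v, ∑ w, skewRandicMatrix G σ v w ^ 2 = ∑ v, ∑ w, randicMatrix G v w ^ 2 := by
  simp_rw [← sq_abs (skewRandicMatrix G σ _ _), hσ.abs_skewRandicMatrix]

theorem norm_le_one_of_mem_spec [DecidableEq V] (hdeg : ∀ v, 1 ≤ G.degree v) {z : ℂ}
    (hz : z ∈ spec (skewRandicMatrix G σ)) : ‖z‖ ≤ 1 := by
  obtain ⟨x, hx, hMx⟩ := exists_mulVec_eq_smul_of_isRoot_charpoly (isRoot_of_mem_roots hz)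
  refine norm_le_of_mulVec_eq_smul (p := fun v => √(G.degree v : ℝ))
    (fun v => Real.sqrt_pos.mpr (by exact_mod_cast hdeg v)) (fun v => le_of_eq ?_) hx hMx
  simpa [hσ.abs_skewRandicMatrix, mulVec, dotProduct] using
    congrFun G.randicMatrix_mulVec_sqrt_degree v

end IsOrientation

theorem skewRandic_energy_upper_bound_equality_general
    {V : Type*} [Fintype V] [DecidableEq V] (G : SimpleGraph V) [DecidableRel G.Adj]
    (σ : V → V → ℝ) (hσ : IsOrientation G σ)
    (hdeg : ∀ v : V, 1 ≤ G.degree v) :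
    energy (skewRandicMatrix G σ) = 2 * (Fintype.card V / 2 : ℕ) ↔
      (Even (Fintype.card V) ∧ ∀ v : V, G.degree v = 1) ∨
      (Odd (Fintype.card V) ∧
        ∃ c : V, G.degree c = 2 ∧ ∀ v : V, v ≠ c → G.degree v = 1) := by
  have hgap := G.sum_sq_randicMatrix_add_sum_randicGap hdeg
  rw [energy_eq_two_mul_half_card_iff hσ.skewRandicMatrix_transpose
    fun _ => hσ.norm_le_one_of_mem_spec hdeg, hσ.sum_sq_skewRandicMatrix]
  rcases Nat.even_or_odd (Fintype.card V) with hn | hn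
  · have hk : (2 * (Fintype.card V / 2 : ℕ) : ℝ) = Fintype.card V := by
      exact_mod_cast Nat.two_mul_div_two_of_even hn
    simp only [hn, true_and, Nat.not_odd_iff_even.mpr hn, false_and, or_false, hk,
      ← G.sum_randicGap_eq_zero_iff hdeg]
    constructor <;> intro <;> linarith
  · have hk : (2 * (Fintype.card V / 2 : ℕ) : ℝ) + 1 = Fintype.card V := by
      exact_mod_cast Nat.two_mul_div_two_add_one_of_odd hn
    simp only [hn, true_and, Nat.not_even_iff_odd.mpr hn, false_and, false_or,
      ← G.sum_randicGap_eq_one_iff hdeg]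
    constructor <;> intro <;> linarith

theorem skewRandic_energy_upper_bound_equality
    {V : Type*} [Fintype V] [DecidableEq V] (G : SimpleGraph V) [DecidableRel G.Adj]
    (σ : V → V → ℝ) (hσ : IsOrientation G σ) (hn : 2 ≤ Fintype.card V)
    (hdeg : ∀ v : V, 1 ≤ G.degree v) :
    energy (skewRandicMatrix G σ) = 2 * (Fintype.card V / 2 : ℕ) ↔
      (Even (Fintype.card V) ∧ ∀ v : V, G.degree v = 1) ∨
      (Odd (Fintype.card V) ∧
        ∃ c : V, G.degree c = 2 ∧ ∀ v : V, v ≠ c → G.degree v = 1) :=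
  skewRandic_energy_upper_bound_equality_general G σ hσ hdeg
end

section
/- Let n ≥ 3 be odd and let G be the star K_{1,n−1} on a finite vertex set V of size n: there is a vertex c adjacent to every other vertex, and these are the only edges of G. Then for every orientation σ of G, the skew Randić energy satisfies RE_s(G^σ) = 2. -/
open Matrix Polynomial

/-!
For the star with centre `c`, the skew Randić matrix is `e uᵀ - u eᵀ`, where `e` is the indicator
of `c` and `u = σ(c, ·) / √d(c)` is a unit vector orthogonal to `e`. Factoring this rank-two
matrix as `U W` with `U : V × 2` and `W : 2 × V`, its characteristic polynomial is `X ^ (n - 2)`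
times that of `W U = [[0, 1], [-1, 0]]`, i.e. `X ^ (n - 2) * (X ^ 2 + 1)`. So the spectrum is
`0` (with multiplicity `n - 2`) and `±i`, and the energy is `2`.
-/

theorem Matrix.charpoly_vecMulVec_sub_vecMulVec {R n : Type*} [CommRing R] [Nontrivial R]
    [Fintype n] [DecidableEq n] (e u : n → R) (hn : 2 ≤ Fintype.card n) :
    (vecMulVec e u - vecMulVec u e).charpoly =
      X ^ (Fintype.card n - 2) * (X ^ 2 + C ((e ⬝ᵥ e) * (u ⬝ᵥ u) - (e ⬝ᵥ u) ^ 2)) := by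
  let U : Matrix n (Fin 2) R := of fun i => ![e i, u i]
  let W : Matrix (Fin 2) n R := of ![u, -e]
  have hUW : U * W = vecMulVec e u - vecMulVec u e := by
    ext i j
    simp [U, W, mul_apply, Fin.sum_univ_two, vecMulVec_apply, sub_eq_add_neg]
  have hWU : W * U = !![u ⬝ᵥ e, u ⬝ᵥ u; -(e ⬝ᵥ e), -(e ⬝ᵥ u)] := by
    ext k l
    fin_cases k <;> fin_cases l <;> simp [U, W, mul_apply, dotProduct]
  rw [← hUW, charpoly_mul_comm_of_le _ _ (by simpa using hn), hWU, charpoly_fin_two,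
    trace_fin_two_of, det_fin_two_of, dotProduct_comm u e, add_neg_cancel, C_0, zero_mul,
    sub_zero, Fintype.card_fin]
  congr 3
  ring

theorem energy_eq_two_of_charpoly_eq {V : Type*} [Fintype V] [DecidableEq V]
    (M : Matrix V V ℝ) (k : ℕ) (h : M.charpoly = X ^ k * (X ^ 2 + 1)) : energy M = 2 := by
  have hfactor : (X ^ 2 + 1 : ℂ[X]) = (X - C Complex.I) * (X - C (-Complex.I)) := by
    rw [C_neg, sub_neg_eq_add, mul_comm, ← sq_sub_sq, ← C_pow, Complex.I_sq, C_neg, C_1,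
      sub_neg_eq_add]
  have hmonic : ((X : ℂ[X]) - C Complex.I) * (X - C (-Complex.I)) |>.Monic :=
    (monic_X_sub_C _).mul (monic_X_sub_C _)
  have hspec : spec M = Multiset.replicate k 0 + {Complex.I, -Complex.I} := by
    rw [spec, show M.map (fun x : ℝ => (x : ℂ)) = M.map Complex.ofRealHom from rfl,
      charpoly_map, h]
    simp only [Polynomial.map_mul, Polynomial.map_pow, Polynomial.map_add, map_X,
      Polynomial.map_one]
    rw [hfactor, roots_mul ((monic_X_pow k).mul hmonic).ne_zero,
      roots_mul hmonic.ne_zero, roots_X_pow, roots_X_sub_C, roots_X_sub_C,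
      Multiset.nsmul_singleton, Multiset.singleton_add]
    rfl
  norm_num [energy, hspec]

namespace IsOrientation

variable {V : Type*} [Fintype V] {G : SimpleGraph V} [DecidableRel G.Adj] {σ : V → V → ℝ}

theorem sum_sq_eq_degree (hσ : IsOrientation G σ) (v : V) :
    ∑ w, σ v w ^ 2 = G.degree v := by
  simp [hσ.sq_apply, ← SimpleGraph.card_neighborFinset_eq_degree,
    SimpleGraph.neighborFinset_eq_filter]

theorem dotProduct_self_row_div_sqrt_degree (hσ : IsOrientation G σ) {c : V}
    (hc : G.degree c ≠ 0) :
    (fun w => σ c w / √(G.degree c)) ⬝ᵥ (fun w => σ c w / √(G.degree c)) = 1 := by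
  simp only [dotProduct, ← sq, div_pow, Real.sq_sqrt (Nat.cast_nonneg _), ← Finset.sum_div,
    hσ.sum_sq_eq_degree]
  exact div_self (Nat.cast_ne_zero.2 hc)

end IsOrientation

section Star

variable {V : Type*} [Fintype V] {G : SimpleGraph V} [DecidableRel G.Adj] {c : V}

theorem SimpleGraph.degree_eq_one_of_adj_center (hc : ∀ v w, G.Adj v w → v = c ∨ w = c)
    {v : V} (hv : G.Adj v c) : G.degree v = 1 := by
  rw [← card_neighborFinset_eq_degree, Finset.card_eq_one]
  refine ⟨c, Finset.eq_singleton_iff_unique_mem.2 ⟨by simpa using hv, fun w hw => ?_⟩⟩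
  rw [mem_neighborFinset] at hw
  exact (hc v w hw).resolve_left (by rintro rfl; exact G.loopless.irrefl _ hv)

variable [DecidableEq V]

theorem skewRandicMatrix_eq_of_forall_adj_center (hc : ∀ v w, G.Adj v w → v = c ∨ w = c)
    {σ : V → V → ℝ} (hσ : IsOrientation G σ) :
    skewRandicMatrix G σ =
      vecMulVec (Pi.single c 1) (fun w => σ c w / √(G.degree c)) -
        vecMulVec (fun w => σ c w / √(G.degree c)) (Pi.single c 1) := by
  ext v w
  simp only [skewRandicMatrix, Matrix.sub_apply, vecMulVec_apply, Pi.single_apply]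
  by_cases hvw : G.Adj v w
  · rcases hc v w hvw with rfl | rfl
    · have hw : w ≠ v := G.ne_of_adj hvw |>.symm
      simp [hw, SimpleGraph.degree_eq_one_of_adj_center hc hvw.symm]
    · have hv : v ≠ w := G.ne_of_adj hvw
      simp [hv, SimpleGraph.degree_eq_one_of_adj_center hc hvw, hσ.apply_swap w v, neg_div,
        mul_comm]
  · have hvw' : ¬G.Adj w v := fun h => hvw h.symm
    by_cases hv : v = c <;> by_cases hw : w = c <;> subst_vars <;>
      simp [*, hσ.2.2]

end Star

theorem skewRandic_energy_star_odd_general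
    {V : Type*} [Fintype V] [DecidableEq V] (G : SimpleGraph V) [DecidableRel G.Adj]
    (hn : 3 ≤ Fintype.card V) (c : V)
    (hstar : ∀ v w : V, G.Adj v w ↔ ((v = c ∧ w ≠ c) ∨ (w = c ∧ v ≠ c)))
    (σ : V → V → ℝ) (hσ : IsOrientation G σ) :
    energy (skewRandicMatrix G σ) = 2 := by
  have hcenter : ∀ v w, G.Adj v w → v = c ∨ w = c := fun v w h => by
    rcases (hstar v w).1 h with h | h
    exacts [Or.inl h.1, Or.inr h.1]
  have hdeg : G.degree c ≠ 0 := by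
    obtain ⟨v, hv⟩ := Fintype.exists_ne_of_one_lt_card (by omega) c
    exact (G.degree_pos_iff_exists_adj c).2 ⟨v, (hstar c v).2 (Or.inl ⟨rfl, hv⟩)⟩ |>.ne'
  apply energy_eq_two_of_charpoly_eq _ (Fintype.card V - 2)
  rw [skewRandicMatrix_eq_of_forall_adj_center hcenter hσ,
    charpoly_vecMulVec_sub_vecMulVec _ _ (by omega), hσ.dotProduct_self_row_div_sqrt_degree hdeg]
  simp [single_dotProduct, hσ.apply_self]

theorem skewRandic_energy_star_odd
    {V : Type*} [Fintype V] [DecidableEq V] (G : SimpleGraph V) [DecidableRel G.Adj]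
    (hn : 3 ≤ Fintype.card V) (hodd : Odd (Fintype.card V)) (c : V)
    (hstar : ∀ v w : V, G.Adj v w ↔ ((v = c ∧ w ≠ c) ∨ (w = c ∧ v ≠ c)))
    (σ : V → V → ℝ) (hσ : IsOrientation G σ) :
    energy (skewRandicMatrix G σ) = 2 :=
  skewRandic_energy_star_odd_general G hn c hstar σ hσ
end

section
/- Let T be a tree (a connected acyclic simple graph) on a finite nonempty vertex set V. Then for any two orientations σ and τ of T, the skew Randić energies coincide: RE_s(T^σ) = RE_s(T^τ). -/
open Matrix Polynomial

/-!
On a tree, the product `σ v w * τ v w` of two orientations is a symmetric `±1` edge labelling,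
hence a coboundary `ε v * ε w` for a vertex signing `ε` (take for `ε v` the product of the labels
along the unique path from a fixed root to `v`). Then `R_s(T^σ) = D R_s(T^τ) D` with
`D = diagonal ε` and `D * D = 1`, so the two matrices have the same characteristic polynomial.
-/

namespace Matrix

theorem charpoly_diagonal_mul_mul_diagonal {n R : Type*} [Fintype n] [DecidableEq n]
    [CommRing R] (d : n → R) (hd : ∀ i, d i * d i = 1) (M : Matrix n n R) :
    (diagonal d * M * diagonal d).charpoly = M.charpoly := by
  have hdd : diagonal d * diagonal d = 1 := by
    rw [diagonal_mul_diagonal, ← diagonal_one]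
    exact congrArg diagonal (funext hd)
  rw [charpoly_mul_comm, ← Matrix.mul_assoc, hdd, Matrix.one_mul]

end Matrix

namespace SimpleGraph

variable {V M : Type*} {G : SimpleGraph V} [CommMonoid M]

def Walk.dartProd (s : V → V → M) {u v : V} (p : G.Walk u v) : M :=
  (p.darts.map fun d => s d.fst d.snd).prod

theorem Walk.dartProd_concat (s : V → V → M) {u v w : V} (p : G.Walk u v) (h : G.Adj v w) :
    (p.concat h).dartProd s = p.dartProd s * s v w := by
  simp [dartProd, darts_concat]

theorem Walk.dartProd_mul_self (s : V → V → M) (hs : ∀ v w, G.Adj v w → s v w * s v w = 1)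
    {u v : V} (p : G.Walk u v) : p.dartProd s * p.dartProd s = 1 := by
  rw [dartProd, ← List.prod_map_mul]
  exact List.prod_eq_one fun x hx => by
    obtain ⟨d, -, rfl⟩ := List.mem_map.mp hx
    exact hs _ _ d.adj

theorem IsTree.exists_eq_mul_of_mul_self_eq_one (hG : G.IsTree) (s : V → V → M)
    (hs : ∀ v w, G.Adj v w → s v w * s v w = 1) (hsymm : ∀ v w, G.Adj v w → s v w = s w v) :
    ∃ ε : V → M, (∀ v, ε v * ε v = 1) ∧ ∀ v w, G.Adj v w → s v w = ε v * ε w := by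
  obtain ⟨r⟩ := hG.connected.nonempty
  choose P hP using fun v => (hG.existsUnique_path r v).exists
  have hstep : ∀ v w (h : G.Adj v w), v ∈ (P w).support →
      (P w).dartProd s = (P v).dartProd s * s v w := fun v w h hv => by
    rw [hG.isAcyclic.path_concat (hP v) (hP w) h hv, Walk.dartProd_concat]
  refine ⟨fun v => (P v).dartProd s, fun v => Walk.dartProd_mul_self s hs (P v), ?_⟩
  intro v w h
  change s v w = (P v).dartProd s * (P w).dartProd s
  by_cases hv : v ∈ (P w).support
  · rw [hstep v w h hv, ← mul_assoc, Walk.dartProd_mul_self s hs, one_mul]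
  · have hw : w ∈ (P v).support :=
      hG.isAcyclic.mem_support_of_ne_mem_support_of_adj_of_isPath (hP v) (hP w) h hv
    rw [hstep w v h.symm hw, hsymm v w h, mul_right_comm, Walk.dartProd_mul_self s hs, one_mul]

end SimpleGraph

section Orientation

variable {V : Type*} [Fintype V] {G : SimpleGraph V} [DecidableRel G.Adj] {σ τ : V → V → ℝ}

theorem IsOrientation.antisymm (hσ : IsOrientation G σ) (v w : V) : σ w v = -σ v w := by
  linarith [hσ.1 v w]

theorem IsOrientation.mul_self_of_adj (hσ : IsOrientation G σ) {v w : V} (h : G.Adj v w) :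
    σ v w * σ v w = 1 := by
  rcases hσ.2.1 v w h with h1 | h1 <;> simp [h1]

theorem IsOrientation.exists_eq_switch_of_isTree (hG : G.IsTree) (hσ : IsOrientation G σ)
    (hτ : IsOrientation G τ) :
    ∃ ε : V → ℝ, (∀ v, ε v * ε v = 1) ∧ ∀ v w, σ v w = ε v * τ v w * ε w := by
  obtain ⟨ε, hε, hεs⟩ := hG.exists_eq_mul_of_mul_self_eq_one (fun v w => σ v w * τ v w)
    (fun v w h => by
      linear_combination (σ v w * σ v w) * hτ.mul_self_of_adj h + hσ.mul_self_of_adj h)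
    (fun v w _ => by rw [hσ.antisymm, hτ.antisymm]; ring)
  refine ⟨ε, hε, fun v w => ?_⟩
  by_cases h : G.Adj v w
  · linear_combination τ v w * hεs v w h - σ v w * hτ.mul_self_of_adj h
  · simp [hσ.2.2 v w h, hτ.2.2 v w h]

end Orientation

theorem skewRandicMatrix_eq_diagonal_mul_mul_diagonal {V : Type*} [Fintype V] [DecidableEq V]
    (G : SimpleGraph V) [DecidableRel G.Adj] {σ τ : V → V → ℝ} (ε : V → ℝ)
    (h : ∀ v w, σ v w = ε v * τ v w * ε w) :
    skewRandicMatrix G σ = diagonal ε * skewRandicMatrix G τ * diagonal ε := by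
  ext v w
  simp only [mul_diagonal, diagonal_mul, skewRandicMatrix, h]
  ring

theorem energy_eq_of_charpoly_eq {V : Type*} [Fintype V] [DecidableEq V] {A B : Matrix V V ℝ}
    (h : A.charpoly = B.charpoly) : energy A = energy B := by
  have hspec : spec A = spec B := by
    change (A.map Complex.ofRealHom).charpoly.roots = (B.map Complex.ofRealHom).charpoly.roots
    rw [charpoly_map, charpoly_map, h]
  rw [energy, energy, hspec]

theorem skewRandic_energy_tree_orientation_independent_general
    {V : Type*} [Fintype V] [DecidableEq V]
    (T : SimpleGraph V) [DecidableRel T.Adj]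
    (hconn : T.Connected) (hacyc : T.IsAcyclic)
    (σ τ : V → V → ℝ) (hσ : IsOrientation T σ) (hτ : IsOrientation T τ) :
    energy (skewRandicMatrix T σ) = energy (skewRandicMatrix T τ) := by
  obtain ⟨ε, hε, hswitch⟩ := hσ.exists_eq_switch_of_isTree ⟨hconn, hacyc⟩ hτ
  rw [skewRandicMatrix_eq_diagonal_mul_mul_diagonal T ε hswitch]
  exact energy_eq_of_charpoly_eq (charpoly_diagonal_mul_mul_diagonal ε hε _)

theorem skewRandic_energy_tree_orientation_independent
    {V : Type*} [Fintype V] [DecidableEq V] [Nonempty V]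
    (T : SimpleGraph V) [DecidableRel T.Adj]
    (hconn : T.Connected) (hacyc : T.IsAcyclic)
    (σ τ : V → V → ℝ) (hσ : IsOrientation T σ) (hτ : IsOrientation T τ) :
    energy (skewRandicMatrix T σ) = energy (skewRandicMatrix T τ) :=
  skewRandic_energy_tree_orientation_independent_general T hconn hacyc σ τ hσ hτ
end

section
/- Let T be a tree (a connected acyclic simple graph) on a finite nonempty vertex set V. Then for every orientation σ of T, the skew Randić energy of T^σ equals the Randić energy of T: RE_s(T^σ) = RE(T). -/
open Matrix Polynomial

/-!
On a tree the edge labels `g v w = -i σ v w` satisfy `g v w * g w v = 1`, so they are the ratios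
`f w / f v` of a nowhere-vanishing vertex potential `f`. Conjugating by `diagonal f` turns
`R_s(T^σ)` into `i R(T)`: the skew Randić spectrum is `i` times the Randić spectrum, and
multiplying by `i` preserves absolute values.
-/

namespace Matrix

variable {n R : Type*} [Fintype n] [DecidableEq n] [CommRing R]

theorem charpoly_eq_of_mul_eq_mul {P A B : Matrix n n R} (hP : IsUnit P) (h : P * A = B * P) :
    A.charpoly = B.charpoly := by
  obtain ⟨P, rfl⟩ := hP
  have hA : A = P⁻¹.val * B * P.val := by
    rw [mul_assoc, ← h, ← mul_assoc, Units.inv_mul, one_mul]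
  rw [hA, mul_assoc, charpoly_mul_comm, mul_assoc, Units.mul_inv, mul_one]

theorem charpoly_smul {K : Type*} [Field K] [Infinite K] (M : Matrix n n K) {c : K} (hc : c ≠ 0) :
    (c • M).charpoly = M.charpoly.scaleRoots c := by
  refine Polynomial.funext fun x => ?_
  obtain ⟨y, rfl⟩ : ∃ y, x = c * y := ⟨c⁻¹ * x, by field_simp⟩
  rw [scaleRoots_eval_mul, charpoly_natDegree_eq_dim, eval_charpoly, eval_charpoly,
    ← det_smul, smul_sub, scalar_apply, scalar_apply, ← diagonal_smul]
  rfl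

end Matrix

namespace SimpleGraph

variable {V : Type*} {G : SimpleGraph V}

theorem IsAcyclic.eq_concat_or_eq_concat_of_adj (hG : G.IsAcyclic) {u v w : V}
    {p : G.Walk u v} {q : G.Walk u w} (hp : p.IsPath) (hq : q.IsPath) (hadj : G.Adj v w) :
    q = p.concat hadj ∨ p = q.concat hadj.symm := by
  classical
  by_cases hv : v ∈ q.support
  · exact .inl (hG.path_concat hp hq hadj hv)
  · exact .inr (hG.path_concat hq hp hadj.symm
      (hG.mem_support_of_ne_mem_support_of_adj_of_isPath hp hq hadj hv))

theorem IsTree.exists_potential {α : Type*} [CommMonoid α] (hG : G.IsTree) (g : V → V → α)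
    (hg : ∀ v w, G.Adj v w → g v w * g w v = 1) :
    ∃ f : V → α, (∀ v, IsUnit (f v)) ∧ ∀ v w, G.Adj v w → f w = f v * g v w := by
  obtain ⟨r⟩ := hG.connected.nonempty
  choose P hP _ using hG.existsUnique_path r
  let gain {v w : V} (p : G.Walk v w) : α := (p.darts.map fun d => g d.fst d.snd).prod
  have gain_concat {v w : V} (p : G.Walk r v) (h : G.Adj v w) :
      gain (p.concat h) = gain p * g v w := by
    simp [gain, Walk.darts_concat]
  refine ⟨fun v => gain (P v), fun v => List.prod_isUnit ?_, fun v w h => ?_⟩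
  · simp only [List.mem_map]
    rintro _ ⟨d, -, rfl⟩
    exact IsUnit.of_mul_eq_one _ (hg _ _ d.adj)
  · show gain (P w) = gain (P v) * g v w
    rcases hG.isAcyclic.eq_concat_or_eq_concat_of_adj (hP v) (hP w) h with hw | hv
    · rw [hw, gain_concat]
    · rw [hv, gain_concat, mul_assoc, hg w v h.symm, mul_one]

end SimpleGraph

theorem IsOrientation.mul_swap_eq_neg_one {V : Type*} [Fintype V] {G : SimpleGraph V}
    [DecidableRel G.Adj] {σ : V → V → ℝ} (hσ : IsOrientation G σ) {v w : V} (h : G.Adj v w) :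
    σ v w * σ w v = -1 := by
  obtain ⟨hanti, hpm, -⟩ := hσ
  rw [eq_neg_of_add_eq_zero_right (hanti v w)]
  rcases hpm v w h with h1 | h1 <;> rw [h1] <;> norm_num

theorem skewRandicMatrix_apply_eq_mul {V : Type*} [Fintype V] {G : SimpleGraph V}
    [DecidableRel G.Adj] {σ : V → V → ℝ} (hσ : IsOrientation G σ) (v w : V) :
    skewRandicMatrix G σ v w = σ v w * randicMatrix G v w := by
  by_cases h : G.Adj v w
  · simp only [skewRandicMatrix, randicMatrix, if_pos h]
    exact div_eq_mul_one_div _ _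
  · simp [skewRandicMatrix, randicMatrix, h, hσ.2.2 v w h]

open Complex in
theorem charpoly_skewRandicMatrix_eq {V : Type*} [Fintype V] [DecidableEq V]
    {T : SimpleGraph V} [DecidableRel T.Adj] (hT : T.IsTree) {σ : V → V → ℝ}
    (hσ : IsOrientation T σ) :
    ((skewRandicMatrix T σ).map ofReal).charpoly = (I • (randicMatrix T).map ofReal).charpoly := by
  obtain ⟨f, hfu, hf⟩ := hT.exists_potential (fun v w => -I * σ v w) fun v w h => by
    have hσvw : (σ v w : ℂ) * σ w v = -1 := mod_cast hσ.mul_swap_eq_neg_one h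
    linear_combination (-1 : ℂ) * I_mul_I + I ^ 2 * hσvw
  refine charpoly_eq_of_mul_eq_mul (isUnit_diagonal.2 (Pi.isUnit_iff.2 hfu)) (ext fun v w => ?_)
  rw [diagonal_mul, mul_diagonal, Matrix.smul_apply, map_apply, map_apply,
    skewRandicMatrix_apply_eq_mul hσ]
  by_cases h : T.Adj v w
  · rw [hf v w h, smul_eq_mul, ofReal_mul]
    linear_combination σ v w * randicMatrix T v w * f v * I_mul_I
  · simp [randicMatrix, h]

theorem skewRandic_energy_tree_eq_randic_energy_general
    {V : Type*} [Fintype V] [DecidableEq V]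
    (T : SimpleGraph V) [DecidableRel T.Adj]
    (hconn : T.Connected) (hacyc : T.IsAcyclic)
    (σ : V → V → ℝ) (hσ : IsOrientation T σ) :
    energy (skewRandicMatrix T σ) = energy (randicMatrix T) := by
  unfold energy spec
  rw [charpoly_skewRandicMatrix_eq ⟨hconn, hacyc⟩ hσ, charpoly_smul _ Complex.I_ne_zero,
    roots_scaleRoots _ (isUnit_iff_ne_zero.2 Complex.I_ne_zero), Multiset.map_map]
  simp

theorem skewRandic_energy_tree_eq_randic_energy
    {V : Type*} [Fintype V] [DecidableEq V] [Nonempty V]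
    (T : SimpleGraph V) [DecidableRel T.Adj]
    (hconn : T.Connected) (hacyc : T.IsAcyclic)
    (σ : V → V → ℝ) (hσ : IsOrientation T σ) :
    energy (skewRandicMatrix T σ) = energy (randicMatrix T) :=
  skewRandic_energy_tree_eq_randic_energy_general T hconn hacyc σ hσ
end

section
/- Let X be a real m×n matrix and form the real square matrices A = [[0, X], [Xᵀ, 0]] and B = [[0, X], [−Xᵀ, 0]] of size (m+n)×(m+n). Then the multiset of roots (with multiplicity, over ℂ) of the characteristic polynomial of B equals the image under multiplication by i of the multiset of roots of the characteristic polynomial of A; in symbols, Sp(B) = i·Sp(A). -/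
open Matrix Polynomial

/-! Over `ℂ`, conjugating by `diag(1, i)` turns `i • [[0, X], [Xᵀ, 0]]` into
`[[0, X], [-Xᵀ, 0]]`, so the two matrices have the same characteristic polynomial; and scaling a
matrix by a unit `c` scales the roots of its characteristic polynomial by `c`. -/

namespace Matrix

variable {R : Type*} [CommRing R]

theorem charpoly_smul_eq_scaleRoots [IsDomain R] [Infinite R] {n : Type*} [Fintype n]
    [DecidableEq n] (M : Matrix n n R) (c : Rˣ) :
    ((c : R) • M).charpoly = M.charpoly.scaleRoots c := by
  refine Polynomial.funext fun t => ?_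
  obtain ⟨s, rfl⟩ : ∃ s, t = c * s := ⟨↑c⁻¹ * t, by simp⟩
  rw [scaleRoots_eval_mul, charpoly_natDegree_eq_dim, eval_charpoly, eval_charpoly,
    ← det_smul, smul_sub, map_mul, scalar_apply c.val, ← smul_eq_diagonal_mul]

theorem roots_charpoly_smul [IsDomain R] [Infinite R] {n : Type*} [Fintype n]
    [DecidableEq n] (M : Matrix n n R) (c : Rˣ) :
    ((c : R) • M).charpoly.roots = M.charpoly.roots.map ((c : R) * ·) := by
  rw [charpoly_smul_eq_scaleRoots, roots_scaleRoots _ c.isUnit]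

theorem charpoly_fromBlocks_zero_smul {p q : Type*} [Fintype p] [Fintype q] [DecidableEq p]
    [DecidableEq q] (Y : Matrix p q R) (Z : Matrix q p R) (u : Rˣ) :
    (fromBlocks 0 ((↑u⁻¹ : R) • Y) ((u : R) • Z) 0).charpoly =
      (fromBlocks 0 Y Z 0).charpoly := by
  let D : (Matrix (p ⊕ q) (p ⊕ q) R)ˣ :=
    ⟨fromBlocks 1 0 0 ((↑u⁻¹ : R) • 1), fromBlocks 1 0 0 ((u : R) • 1),
      by simp [fromBlocks_multiply, smul_smul], by simp [fromBlocks_multiply, smul_smul]⟩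
  rw [← charpoly_units_conj D, ← coe_units_inv]
  simp [D, fromBlocks_multiply, smul_smul]

end Matrix

theorem spectrum_skew_block_eq_i_mul_spectrum_sym_block
    (m n : ℕ) (X : Matrix (Fin m) (Fin n) ℝ) :
    spec (Matrix.fromBlocks 0 X (-Xᵀ) 0)
      = (spec (Matrix.fromBlocks 0 X Xᵀ 0)).map (fun z => Complex.I * z) := by
  simp only [spec, fromBlocks_map, transpose_map, Matrix.map_neg _ Complex.ofReal_neg,
    Matrix.map_zero _ Complex.ofReal_zero]
  set Y : Matrix (Fin m) (Fin n) ℂ := X.map (↑)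
  let i : ℂˣ := Units.mk0 Complex.I Complex.I_ne_zero
  have skew_charpoly : (fromBlocks 0 Y (-Yᵀ) 0).charpoly
      = (Complex.I • fromBlocks 0 Y Yᵀ 0).charpoly := calc
    _ = (fromBlocks 0 ((↑i⁻¹ : ℂ) • (Complex.I • Y))
          ((i : ℂ) • (Complex.I • Yᵀ)) 0).charpoly := by simp [i, smul_smul]
    _ = _ := by
      rw [charpoly_fromBlocks_zero_smul, fromBlocks_smul, smul_zero, smul_zero]
  rw [skew_charpoly]
  exact roots_charpoly_smul _ i
end

section
/- Let k ≥ 3 and let X be a real m×n matrix with m, n ≥ k whose entries are all nonnegative, such that for all indices 1 ≤ i, j ≤ k the entry X i j is zero unless j = i or j ≡ i−1 (mod k, identifying residue 0 with k), and such that X i i > 0 and X i j > 0 for j ≡ i−1 (mod k), for all 1 ≤ i ≤ k. Let Y be the matrix obtained from X by replacing the (1,1) entry by −X 1 1. Assume XᵀX is irreducible, i.e., for all indices a, b there exists a positive integer t with ((XᵀX)^t) a b > 0. Then ρ(XᵀX) > ρ(YᵀY), where ρ(M) denotes the spectral radius of M, the maximum of the absolute values of the roots of the characteristic polynomial of M over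 ℂ. -/
open Matrix Polynomial

/-- The spectral radius of a real square matrix: the maximum of the absolute values
of the roots of its characteristic polynomial over `ℂ`. -/
noncomputable def specRad {n : Type*} [Fintype n] [DecidableEq n] (M : Matrix n n ℝ) : ℝ :=
  sSup {r : ℝ | ∃ z ∈ spec M, ‖z‖ = r}

/-!
Let `w ≠ 0` satisfy `(YᵀY) w = ρ(YᵀY) w`. Since `|Y| = X` entrywise, `|Yw| ≤ X|w|` coordinatewise,
so by the Rayleigh bound `ρ(YᵀY) ‖w‖² = ‖Yw‖² ≤ ‖X|w|‖² ≤ ρ(XᵀX) ‖w‖²`. If equality held, `|w|`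
would be an eigenvector of the irreducible nonnegative matrix `XᵀX`, hence strictly positive, and no
row sum `(Yw)_i` could involve cancellation. The positive entries `X_{i,i}`, `X_{i,i-1}` of the rows
`i = 2, …, k` then force `w_1, …, w_k` to share one sign, while row `1`, where `Y_{1,1} = -X_{1,1}`
and `Y_{1,k} > 0`, forces `w_1` and `w_k` to have opposite signs.
-/

section SignPattern

lemma Finset.mul_nonneg_of_abs_sum_eq_sum_abs {ι α : Type*} [Ring α] [LinearOrder α]
    [IsStrictOrderedRing α] {s : Finset ι} {f : ι → α} (h : |∑ i ∈ s, f i| = ∑ i ∈ s, |f i|)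
    {i j : ι} (hi : i ∈ s) (hj : j ∈ s) : 0 ≤ f i * f j := by
  rcases abs_cases (∑ i ∈ s, f i) with ⟨hs, -⟩ | ⟨hs, -⟩
  · have hf : ∀ l ∈ s, |f l| - f l = 0 := (Finset.sum_eq_zero_iff_of_nonneg
      fun l _ => sub_nonneg.2 (le_abs_self (f l))).1
        (by rw [Finset.sum_sub_distrib, ← h, hs, sub_self])
    have hpos : ∀ l ∈ s, 0 ≤ f l := fun l hl => sub_eq_zero.1 (hf l hl) ▸ abs_nonneg _
    exact mul_nonneg (hpos i hi) (hpos j hj)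
  · have hf : ∀ l ∈ s, |f l| + f l = 0 := (Finset.sum_eq_zero_iff_of_nonneg
      fun l _ => neg_le_iff_add_nonneg'.1 (neg_abs_le (f l))).1
        (by rw [Finset.sum_add_distrib, ← h, hs, neg_add_cancel])
    have hneg : ∀ l ∈ s, f l ≤ 0 := fun l hl => by
      rw [eq_neg_of_add_eq_zero_right (hf l hl)]
      exact neg_nonpos.2 (abs_nonneg _)
    exact mul_nonneg_of_nonpos_of_nonpos (hneg i hi) (hneg j hj)

variable {α : Type*} [CommRing α] [LinearOrder α] [IsStrictOrderedRing α]

lemma mul_pos_of_mul_mul_nonneg {a b x y : α} (hab : 0 < a * b) (hx : x ≠ 0) (hy : y ≠ 0)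
    (h : 0 ≤ a * x * (b * y)) : 0 < x * y :=
  (nonneg_of_mul_nonneg_right (by rwa [mul_mul_mul_comm] at h) hab).lt_of_ne
    (mul_ne_zero hx hy).symm

/-- Subtraction in `Fin k` wraps around, so the positions `(row i, col i)` and
`(row i, col (i - 1))` trace a closed cycle. -/
theorem exists_mul_neg_of_negative_cycle {m n : Type*} {k : ℕ} [NeZero k] (row : Fin k → m)
    (col : Fin k → n) {Y : Matrix m n α} {w : n → α} (hw : ∀ i, w (col i) ≠ 0)
    (hdiag : ∀ i, i ≠ 0 → 0 < Y (row i) (col i)) (h0 : Y (row 0) (col 0) < 0)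
    (hsub : ∀ i, 0 < Y (row i) (col (i - 1))) :
    ∃ i, Y (row i) (col i) * w (col i) * (Y (row i) (col (i - 1)) * w (col (i - 1))) < 0 := by
  by_contra! hcons
  have hstep : ∀ i, i ≠ 0 → (0 < w (col i) ↔ 0 < w (col (i - 1))) := fun i hi =>
    pos_iff_pos_of_mul_pos <|
      mul_pos_of_mul_mul_nonneg (mul_pos (hdiag i hi) (hsub i)) (hw _) (hw _) (hcons i)
  have hflip : 0 < -w (col 0) ↔ 0 < w (col (0 - 1)) :=
    pos_iff_pos_of_mul_pos <| mul_pos_of_mul_mul_nonneg (mul_pos (neg_pos.2 h0) (hsub 0))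
      (neg_ne_zero.2 (hw _)) (hw _) (by simpa only [neg_mul_neg] using hcons 0)
  have hchain : ∀ i, 0 < w (col i) ↔ 0 < w (col 0) := by
    obtain ⟨k, rfl⟩ := Nat.exists_eq_succ_of_ne_zero (NeZero.ne k)
    intro i
    induction i using Fin.induction with
    | zero => rfl
    | succ i ih => rwa [hstep i.succ i.succ_ne_zero, ← Fin.coeSucc_eq_succ, add_sub_cancel_right]
  have hsign : 0 < -w (col 0) ↔ 0 < w (col 0) := hflip.trans (hchain _)
  rcases (hw 0).lt_or_gt with hneg | hpos
  · exact hneg.not_gt (hsign.1 (neg_pos.2 hneg))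
  · exact (neg_pos.1 (hsign.2 hpos)).not_gt hpos

end SignPattern

lemma Fin.val_sub_one_eq_mod {k : ℕ} [NeZero k] (i : Fin k) :
    ((i - 1 : Fin k) : ℕ) = (i + k - 1) % k := by
  rcases (show k = 1 ∨ 1 < k by have := NeZero.pos k; omega) with rfl | hk
  · simp [Fin.val_eq_zero]
  · rw [Fin.val_sub, Fin.val_one', Nat.mod_eq_of_lt hk]
    congr 1
    omega

namespace Matrix

variable {m n : Type*} [Fintype m] [Fintype n]

lemma IsHermitian.spec_eq_map_eigenvalues [DecidableEq n] {M : Matrix n n ℝ}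
    (hM : M.IsHermitian) : spec M = Finset.univ.val.map fun i => (hM.eigenvalues i : ℂ) := by
  rw [spec, show M.map (fun x : ℝ => (x : ℂ)) = M.map Complex.ofRealHom from rfl, charpoly_map,
    hM.charpoly_eq, Polynomial.map_prod]
  simpa using roots_multiset_prod_X_sub_C (Finset.univ.val.map fun i => (hM.eigenvalues i : ℂ))

lemma PosSemidef.isGreatest_spectrum_specRad [DecidableEq n] [Nonempty n] {M : Matrix n n ℝ}
    (hM : M.PosSemidef) : IsGreatest (spectrum ℝ M) (specRad M) := by
  have hset : {r : ℝ | ∃ z ∈ spec M, ‖z‖ = r} = spectrum ℝ M := by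
    ext r
    simp [hM.1.spec_eq_map_eigenvalues, hM.1.spectrum_real_eq_range_eigenvalues,
      abs_of_nonneg (hM.eigenvalues_nonneg _)]
  have hne : (spectrum ℝ M).Nonempty :=
    hM.1.spectrum_real_eq_range_eigenvalues ▸ Set.range_nonempty _
  rw [specRad, hset]
  exact ⟨hne.csSup_mem finite_real_spectrum, fun _ hx => le_csSup finite_real_spectrum.bddAbove hx⟩

lemma exists_mulVec_eq_smul_of_mem_spectrum [DecidableEq n] {K : Type*} [Field K]
    {M : Matrix n n K} {μ : K} (h : μ ∈ spectrum K M) : ∃ v ≠ 0, M *ᵥ v = μ • v := by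
  rw [← spectrum_toLin', ← Module.End.hasEigenvalue_iff_mem_spectrum] at h
  obtain ⟨v, hv⟩ := h.exists_hasEigenvector
  exact ⟨v, hv.2, by simpa using hv.apply_eq_smul⟩

lemma algebraMap_sub_mulVec [DecidableEq n] {R : Type*} [CommRing R] (M : Matrix n n R) (r : R)
    (v : n → R) : (algebraMap R (Matrix n n R) r - M) *ᵥ v = r • v - M *ᵥ v := by
  rw [sub_mulVec, Algebra.algebraMap_eq_smul_one, smul_mulVec, one_mulVec]

section Rayleigh

open scoped MatrixOrder

variable [DecidableEq n] {M : Matrix n n ℝ} {r : ℝ}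

lemma IsHermitian.posSemidef_algebraMap_sub (hM : M.IsHermitian)
    (hr : ∀ x ∈ spectrum ℝ M, x ≤ r) : (algebraMap ℝ (Matrix n n ℝ) r - M).PosSemidef :=
  le_algebraMap_of_spectrum_le hr hM.isSelfAdjoint

lemma IsHermitian.dotProduct_mulVec_le (hM : M.IsHermitian) (hr : ∀ x ∈ spectrum ℝ M, x ≤ r)
    (v : n → ℝ) : v ⬝ᵥ M *ᵥ v ≤ r * (v ⬝ᵥ v) := by
  have := (hM.posSemidef_algebraMap_sub hr).dotProduct_mulVec_nonneg v
  rw [star_trivial, algebraMap_sub_mulVec, dotProduct_sub, dotProduct_smul, smul_eq_mul] at this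
  linarith

lemma IsHermitian.mulVec_eq_smul_of_dotProduct_mulVec_eq (hM : M.IsHermitian)
    (hr : ∀ x ∈ spectrum ℝ M, x ≤ r) {v : n → ℝ} (h : v ⬝ᵥ M *ᵥ v = r * (v ⬝ᵥ v)) :
    M *ᵥ v = r • v := by
  have := ((hM.posSemidef_algebraMap_sub hr).dotProduct_mulVec_zero_iff v).1 (by
    rw [star_trivial, algebraMap_sub_mulVec, dotProduct_sub, dotProduct_smul, smul_eq_mul, h,
      sub_self])
  rwa [algebraMap_sub_mulVec, sub_eq_zero, eq_comm] at this

end Rayleigh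

section SpectralRadius

variable [DecidableEq n] [Nonempty n] {M : Matrix n n ℝ}

lemma PosSemidef.exists_mulVec_eq_specRad_smul (hM : M.PosSemidef) :
    ∃ v ≠ 0, M *ᵥ v = specRad M • v :=
  exists_mulVec_eq_smul_of_mem_spectrum hM.isGreatest_spectrum_specRad.1

lemma PosSemidef.specRad_nonneg (hM : M.PosSemidef) : 0 ≤ specRad M := by
  obtain ⟨i, hi⟩ := hM.1.spectrum_real_eq_range_eigenvalues ▸ hM.isGreatest_spectrum_specRad.1
  exact hi ▸ hM.eigenvalues_nonneg i

lemma PosSemidef.dotProduct_mulVec_le_specRad_mul (hM : M.PosSemidef) (v : n → ℝ) :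
    v ⬝ᵥ M *ᵥ v ≤ specRad M * (v ⬝ᵥ v) :=
  hM.1.dotProduct_mulVec_le hM.isGreatest_spectrum_specRad.2 v

lemma PosSemidef.mulVec_eq_specRad_smul (hM : M.PosSemidef) {v : n → ℝ}
    (h : specRad M * (v ⬝ᵥ v) ≤ v ⬝ᵥ M *ᵥ v) : M *ᵥ v = specRad M • v :=
  hM.1.mulVec_eq_smul_of_dotProduct_mulVec_eq hM.isGreatest_spectrum_specRad.2
    (le_antisymm (hM.dotProduct_mulVec_le_specRad_mul v) h)

end SpectralRadius

lemma posSemidef_transpose_mul_self (A : Matrix m n ℝ) : (Aᵀ * A).PosSemidef := by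
  simpa using posSemidef_conjTranspose_mul_self A

lemma dotProduct_transpose_mul_mulVec (A : Matrix m n ℝ) (v : n → ℝ) :
    v ⬝ᵥ (Aᵀ * A) *ᵥ v = (A *ᵥ v) ⬝ᵥ (A *ᵥ v) := by
  rw [← mulVec_mulVec, dotProduct_mulVec, vecMul_transpose]

lemma dotProduct_self_le_of_abs_le {u u' : m → ℝ} (h : ∀ i, |u i| ≤ u' i) :
    u ⬝ᵥ u ≤ u' ⬝ᵥ u' :=
  Finset.sum_le_sum fun i _ => abs_mul_abs_self (u i) ▸ mul_self_le_mul_self (abs_nonneg _) (h i)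

lemma abs_eq_of_dotProduct_self_le {u u' : m → ℝ} (h : ∀ i, |u i| ≤ u' i)
    (heq : u' ⬝ᵥ u' ≤ u ⬝ᵥ u) (i : m) : |u i| = u' i := by
  have hsq := (Finset.sum_eq_sum_iff_of_le fun i _ =>
    abs_mul_abs_self (u i) ▸ mul_self_le_mul_self (abs_nonneg _) (h i)).1
    (le_antisymm (dotProduct_self_le_of_abs_le h) heq) i (Finset.mem_univ i)
  exact (mul_self_inj (abs_nonneg _) ((abs_nonneg _).trans (h i))).1 (by rwa [abs_mul_abs_self])

section AbsDomination

variable {X Y : Matrix m n ℝ}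

omit [Fintype m] in
lemma abs_mulVec_le (h : ∀ i j, |Y i j| ≤ X i j) (w : n → ℝ) (i : m) :
    |(Y *ᵥ w) i| ≤ (X *ᵥ |w|) i :=
  (Finset.abs_sum_le_sum_abs _ _).trans <| Finset.sum_le_sum fun j _ => by
    rw [abs_mul, Pi.abs_apply]
    exact mul_le_mul_of_nonneg_right (h i j) (abs_nonneg _)

omit [Fintype m] in
lemma mul_nonneg_of_abs_mulVec_eq (h : ∀ i j, |Y i j| = X i j) {w : n → ℝ} {i : m}
    (hi : |(Y *ᵥ w) i| = (X *ᵥ |w|) i) (j j' : n) : 0 ≤ Y i j * w j * (Y i j' * w j') :=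
  Finset.mul_nonneg_of_abs_sum_eq_sum_abs (f := fun j => Y i j * w j)
    (by simpa [mulVec, dotProduct, abs_mul, h] using hi) (Finset.mem_univ _) (Finset.mem_univ _)

variable [DecidableEq n] [Nonempty n]

theorem specRad_transpose_mul_self_le_of_abs_le (h : ∀ i j, |Y i j| ≤ X i j) :
    specRad (Yᵀ * Y) ≤ specRad (Xᵀ * X) := by
  obtain ⟨w, hw0, hw⟩ := (posSemidef_transpose_mul_self Y).exists_mulVec_eq_specRad_smul
  refine le_of_mul_le_mul_right ?_ (by simpa using dotProduct_star_self_pos_iff.2 hw0)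
  calc specRad (Yᵀ * Y) * (w ⬝ᵥ w) = (Y *ᵥ w) ⬝ᵥ (Y *ᵥ w) := by
        rw [← dotProduct_transpose_mul_mulVec, hw, dotProduct_smul, smul_eq_mul]
    _ ≤ (X *ᵥ |w|) ⬝ᵥ (X *ᵥ |w|) := dotProduct_self_le_of_abs_le (abs_mulVec_le h w)
    _ ≤ specRad (Xᵀ * X) * (|w| ⬝ᵥ |w|) := by
        rw [← dotProduct_transpose_mul_mulVec]
        exact (posSemidef_transpose_mul_self X).dotProduct_mulVec_le_specRad_mul _
    _ = specRad (Xᵀ * X) * (w ⬝ᵥ w) := by simp [dotProduct, abs_mul_abs_self]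

theorem exists_abs_mulVec_eq_of_specRad_transpose_mul_self_le (h : ∀ i j, |Y i j| ≤ X i j)
    (hle : specRad (Xᵀ * X) ≤ specRad (Yᵀ * Y)) :
    ∃ w ≠ 0, (Xᵀ * X) *ᵥ |w| = specRad (Xᵀ * X) • |w| ∧ ∀ i, |(Y *ᵥ w) i| = (X *ᵥ |w|) i := by
  obtain ⟨w, hw0, hw⟩ := (posSemidef_transpose_mul_self Y).exists_mulVec_eq_specRad_smul
  have hww : |w| ⬝ᵥ |w| = w ⬝ᵥ w := by simp [dotProduct, abs_mul_abs_self]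
  have hYw : specRad (Yᵀ * Y) * (w ⬝ᵥ w) = (Y *ᵥ w) ⬝ᵥ (Y *ᵥ w) := by
    rw [← dotProduct_transpose_mul_mulVec, hw, dotProduct_smul, smul_eq_mul]
  have hXw := (posSemidef_transpose_mul_self X).dotProduct_mulVec_le_specRad_mul |w|
  rw [dotProduct_transpose_mul_mulVec, hww] at hXw
  have hdom := dotProduct_self_le_of_abs_le (abs_mulVec_le h w)
  have hρ : specRad (Xᵀ * X) * (w ⬝ᵥ w) ≤ specRad (Yᵀ * Y) * (w ⬝ᵥ w) :=
    mul_le_mul_of_nonneg_right hle (Fintype.sum_nonneg fun i => mul_self_nonneg (w i))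
  refine ⟨w, hw0, (posSemidef_transpose_mul_self X).mulVec_eq_specRad_smul ?_,
    abs_eq_of_dotProduct_self_le (abs_mulVec_le h w) (by linarith)⟩
  rw [hww, dotProduct_transpose_mul_mulVec]
  linarith

end AbsDomination

theorem IsIrreducible.pos_of_mulVec_eq_smul [DecidableEq n] {R : Type*} [CommRing R]
    [LinearOrder R] [IsStrictOrderedRing R] {A : Matrix n n R} (hA : A.IsIrreducible)
    {v : n → R} (hv : 0 ≤ v) (hv0 : v ≠ 0) {r : R} (hr : 0 ≤ r) (h : A *ᵥ v = r • v) (i : n) :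
    0 < v i := by
  obtain ⟨j, hj⟩ := Pi.lt_def.1 (lt_of_le_of_ne hv hv0.symm) |>.2
  obtain ⟨t, -, ht⟩ := (isIrreducible_iff_exists_pow_pos hA.nonneg).1 hA i j
  have hpow : ∀ t : ℕ, (A ^ t) *ᵥ v = r ^ t • v := by
    intro t
    induction t with
    | zero => simp
    | succ t ih => rw [pow_succ', ← mulVec_mulVec, ih, mulVec_smul, h, smul_smul, pow_succ]
  refine pos_of_mul_pos_right ?_ (pow_nonneg hr t)
  calc 0 < (A ^ t) i j * v j := mul_pos ht hj
    _ ≤ ((A ^ t) *ᵥ v) i := Finset.single_le_sum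
          (fun c _ => mul_nonneg (pow_apply_nonneg hA.nonneg t i c) (hv c)) (Finset.mem_univ j)
    _ = r ^ t * v i := by rw [hpow t, Pi.smul_apply, smul_eq_mul]

end Matrix

theorem spectral_radius_strictly_decreases
    (k m n : ℕ) (hk : 3 ≤ k) (hm : k ≤ m) (hn : k ≤ n)
    (X : Matrix (Fin m) (Fin n) ℝ)
    (hXnonneg : ∀ i j, 0 ≤ X i j)
    (hdiag : ∀ (i : ℕ) (hi : i < k),
      0 < X ⟨i, lt_of_lt_of_le hi hm⟩ ⟨i, lt_of_lt_of_le hi hn⟩)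
    (hsub : ∀ (i : ℕ) (hi : i < k),
      0 < X ⟨i, lt_of_lt_of_le hi hm⟩
            ⟨(i + k - 1) % k, lt_of_lt_of_le (Nat.mod_lt _ (by omega)) hn⟩)
    (Y : Matrix (Fin m) (Fin n) ℝ)
    (hY : ∀ i j, Y i j = if (i : ℕ) = 0 ∧ (j : ℕ) = 0 then -X i j else X i j)
    (hirr : ∀ a b : Fin n, ∃ t : ℕ, 0 < t ∧ 0 < ((Xᵀ * X) ^ t) a b) :
    specRad (Yᵀ * Y) < specRad (Xᵀ * X) := by
  have : NeZero k := ⟨by omega⟩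
  have : Nonempty (Fin n) := ⟨⟨0, by omega⟩⟩
  have hXY : ∀ i j, |Y i j| = X i j := fun i j => by
    rw [hY]; split_ifs <;> simp [abs_of_nonneg (hXnonneg i j)]
  have hXX : (Xᵀ * X).IsIrreducible := (isIrreducible_iff_exists_pow_pos fun a b => by
    rw [mul_apply]
    exact Finset.sum_nonneg fun i _ => mul_nonneg (hXnonneg i a) (hXnonneg i b)).2 hirr
  have hdom : ∀ i j, |Y i j| ≤ X i j := fun i j => (hXY i j).le
  refine (specRad_transpose_mul_self_le_of_abs_le hdom).lt_of_not_ge fun hle => ?_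
  obtain ⟨w, hw0, hwX, hrows⟩ := exists_abs_mulVec_eq_of_specRad_transpose_mul_self_le hdom hle
  have hwpos := hXX.pos_of_mulVec_eq_smul (abs_nonneg w) (by simpa using hw0)
    (posSemidef_transpose_mul_self X).specRad_nonneg hwX
  have hYdiag : ∀ i : Fin k, i ≠ 0 → 0 < Y (Fin.castLE hm i) (Fin.castLE hn i) := fun i hi => by
    rw [hY, if_neg fun h => hi (Fin.ext (by simpa using h.1))]
    exact hdiag i i.2
  have hY00 : Y (Fin.castLE hm 0) (Fin.castLE hn 0) < 0 := by
    rw [hY, if_pos (by simp)]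
    exact neg_neg_of_pos (hdiag 0 (by omega))
  have hYsub : ∀ i : Fin k, 0 < Y (Fin.castLE hm i) (Fin.castLE hn (i - 1)) := fun i => by
    rw [hY, if_neg fun ⟨h1, h2⟩ => by
      simp only [Fin.val_castLE, Fin.val_sub_one_eq_mod] at h1 h2
      rw [h1, Nat.mod_eq_of_lt (by omega)] at h2
      omega]
    convert hsub i i.2 using 2 <;> exact Fin.ext (by simp [Fin.val_sub_one_eq_mod])
  obtain ⟨i, hi⟩ := exists_mul_neg_of_negative_cycle _ _ (fun i => abs_pos.1 (hwpos _))
    hYdiag hY00 hYsub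
  exact hi.not_ge (mul_nonneg_of_abs_mulVec_eq hXY (hrows _) _ _)
end
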